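/- arXiv:2208.08534 — 7 statements merged into one kernel-verified Lean document; each statement's English description precedes it below -/
import Mathlib

section
/- Let Δ be an abstract simplicial complex on [n-1] and let Cone(n,Δ) = Δ ∪ {σ ∪ {n} : σ ∈ Δ}. The map X ↦ (Proj(n,X), Link(n,X)), where Proj(n,X) = X ∩ Δ and Link(n,X) = {σ ∈ Δ : σ ∪ {n} ∈ X}, is a bijection from the set of (n,k)-complexes of Cone(n,Δ) onto a subset of the product of (n-1,k)-complexes of Δ with (n-1,k-1)-complexes of Δ, with inverse (F,R) ↦ F ∪ Cone(n,R); moreover (F,R) ↦ F ∪ Cone(n,R) is injective from the full product into the (n,k)-complexes of Cone(n,Δ). -/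
open Finset

/-- Sign entry of the simplicial boundary matrix between faces `σ ⊆ τ` with `|σ|+1 = |τ|`. -/
def bdE {n : ℕ} (σ τ : Finset (Fin n)) : ℤ :=
  if σ ⊆ τ ∧ σ.card + 1 = τ.card then
    ∑ a ∈ τ \ σ, (-1 : ℤ) ^ (τ.filter (fun b => b < a)).card
  else 0

/-- Faces of `X` of cardinality `c` (i.e. dimension `c-1`). -/
def cF {n : ℕ} (X : Finset (Finset (Fin n))) (c : ℕ) : Finset (Finset (Fin n)) :=
  X.filter (fun s => s.card = c)

/-- Relative faces of the pair `(X,Y)` of cardinality `c`. -/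
def relF {n : ℕ} (X Y : Finset (Finset (Fin n))) (c : ℕ) : Finset (Finset (Fin n)) :=
  (X \ Y).filter (fun s => s.card = c)

/-- Relative boundary matrix from cardinality level `c` to level `c-1`. -/
def dMat {n : ℕ} (X Y : Finset (Finset (Fin n))) (c : ℕ) :
    Matrix ↥(relF X Y (c - 1)) ↥(relF X Y c) ℤ :=
  Matrix.of fun σ τ => bdE σ.1 τ.1

/-- Relative boundary map (as a linear map on integer chains). -/
noncomputable def dLin {n : ℕ} (X Y : Finset (Finset (Fin n))) (c : ℕ) :
    (↥(relF X Y c) → ℤ) →ₗ[ℤ] (↥(relF X Y (c - 1)) → ℤ) :=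
  Matrix.toLin' (dMat X Y c)

/-- Relative simplicial homology of the pair `(X,Y)` at cardinality level `c`
(i.e. the homology group `H_{c-1}(X,Y)`; for `Y = ∅` this is reduced homology `H̃_{c-1}(X)`). -/
abbrev RelH {n : ℕ} (X Y : Finset (Finset (Fin n))) (c : ℕ) :=
  LinearMap.ker (dLin X Y c) ⧸
    Submodule.comap (LinearMap.ker (dLin X Y c)).subtype (LinearMap.range (dLin X Y (c + 1)))

/-- Relative boundary matrix over `ℚ`. -/
noncomputable def qMat {n : ℕ} (X Y : Finset (Finset (Fin n))) (c : ℕ) :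
    Matrix ↥(relF X Y (c - 1)) ↥(relF X Y c) ℚ :=
  (dMat X Y c).map fun z => (z : ℚ)

/-- Relative Betti number at cardinality level `c`, i.e. `β_{c-1}(X,Y)`. -/
noncomputable def bettiL {n : ℕ} (X Y : Finset (Finset (Fin n))) (c : ℕ) : ℕ :=
  ((relF X Y c).card - (qMat X Y c).rank) - (qMat X Y (c + 1)).rank

/-- An abstract simplicial complex (including the empty face). -/
def IsComplex {n : ℕ} (X : Finset (Finset (Fin n))) : Prop :=
  ∅ ∈ X ∧ ∀ s ∈ X, ∀ t ⊆ s, t ∈ X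

/-- `X` is an `(n,k)`-complex of `Δ`: a complex with `K^{k-1} ∩ Δ ⊆ X ⊆ K^k ∩ Δ`. -/
def KCplx {n : ℕ} (Δ : Finset (Finset (Fin n))) (k : ℕ) (X : Finset (Finset (Fin n))) : Prop :=
  IsComplex X ∧ Δ.filter (fun s => s.card ≤ k) ⊆ X ∧ X ⊆ Δ.filter (fun s => s.card ≤ k + 1)

/-- The simplicial cone over `R` with apex the distinguished vertex `Fin.last n`. -/
def coneC {n : ℕ} (R : Finset (Finset (Fin (n + 1)))) : Finset (Finset (Fin (n + 1))) :=
  R ∪ R.image (insert (Fin.last n))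

/-- `Link(n, X)` relative to `Δ`: the faces `σ ∈ Δ` with `σ ∪ {n} ∈ X`. -/
def linkC {n : ℕ} (Δ X : Finset (Finset (Fin (n + 1)))) : Finset (Finset (Fin (n + 1))) :=
  Δ.filter (fun s => insert (Fin.last n) s ∈ X)

/-- The binomial correspondence: for a complex `Δ` on `[n-1]` (faces avoiding the apex
vertex), the map `X ↦ (X ∩ Δ, Link(n,X))` from `(n,k)`-complexes of `Cone(n,Δ)` is injective
with explicit left inverse `(F,R) ↦ F ∪ Cone(n,R)`, lands in the product of the
`(n-1,k)`-complexes and the `(n-1,k-1)`-complexes of `Δ`, and `(F,R) ↦ F ∪ Cone(n,R)` is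
injective from the full product into the `(n,k)`-complexes of `Cone(n,Δ)`. -/
theorem stmt3 (n k : ℕ) (hk : 1 ≤ k) (Δ : Finset (Finset (Fin (n + 1))))
    (hΔ : IsComplex Δ) (hΔn : ∀ s ∈ Δ, Fin.last n ∉ s) :
    (∀ X, KCplx (coneC Δ) k X →
        KCplx Δ k (X ∩ Δ) ∧ KCplx Δ (k - 1) (linkC Δ X) ∧
          (X ∩ Δ) ∪ coneC (linkC Δ X) = X) ∧
    (∀ F R, KCplx Δ k F → KCplx Δ (k - 1) R → KCplx (coneC Δ) k (F ∪ coneC R)) ∧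
    Set.InjOn
      (fun P : Finset (Finset (Fin (n + 1))) × Finset (Finset (Fin (n + 1))) =>
        P.1 ∪ coneC P.2)
      {P | KCplx Δ k P.1 ∧ KCplx Δ (k - 1) P.2} := by

  have memcone : ∀ (R : Finset (Finset (Fin (n+1)))) (t : Finset (Fin (n+1))),
      t ∈ coneC R ↔ t ∈ R ∨ ∃ s ∈ R, insert (Fin.last n) s = t := by
    intro R t; simp [coneC, mem_union, mem_image]
  have hcard : ∀ s ∈ Δ, (insert (Fin.last n) s).card = s.card + 1 := by
    intro s hs; exact card_insert_of_notMem (hΔn s hs)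
  -- the two key retraction lemmas
  have lemA : ∀ F R, KCplx Δ k F → KCplx Δ (k-1) R → (F ∪ coneC R) ∩ Δ = F := by
    intro F R hF hR
    have hFΔ : F ⊆ Δ := fun s hs => (mem_filter.1 (hF.2.2 hs)).1
    have hRF : R ⊆ F := by
      intro s hs
      have h := mem_filter.1 (hR.2.2 hs)
      exact hF.2.1 (mem_filter.2 ⟨h.1, by omega⟩)
    ext t
    simp only [mem_inter, mem_union, memcone]
    constructor
    · rintro ⟨(ht | ht | ⟨s, hs, rfl⟩), htΔ⟩
      · exact ht
      · exact hRF ht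
      · exact absurd (mem_insert_self _ _) (hΔn _ htΔ)
    · intro ht; exact ⟨Or.inl ht, hFΔ ht⟩
  have lemB : ∀ F R, KCplx Δ k F → KCplx Δ (k-1) R → linkC Δ (F ∪ coneC R) = R := by
    intro F R hF hR
    have hFΔ : F ⊆ Δ := fun s hs => (mem_filter.1 (hF.2.2 hs)).1
    have hRΔ : R ⊆ Δ := fun s hs => (mem_filter.1 (hR.2.2 hs)).1
    ext t
    simp only [linkC, mem_filter, mem_union, memcone]
    constructor
    · rintro ⟨htΔ, (h | h | ⟨s, hs, hst⟩)⟩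
      · exact absurd (mem_insert_self _ _) (hΔn _ (hFΔ h))
      · exact absurd (mem_insert_self _ _) (hΔn _ (hRΔ h))
      · have : s = t := by
          have h1 := congrArg (·.erase (Fin.last n)) hst
          simpa [Finset.erase_insert (hΔn s (hRΔ hs)),
            Finset.erase_insert (hΔn t htΔ)] using h1
        exact this ▸ hs
    · intro ht
      exact ⟨hRΔ ht, Or.inr (Or.inr ⟨t, ht, rfl⟩)⟩
  -- part 2
  have part2 : ∀ F R, KCplx Δ k F → KCplx Δ (k-1) R → KCplx (coneC Δ) k (F ∪ coneC R) := by
    intro F R hF hR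
    have hFΔ : F ⊆ Δ := fun s hs => (mem_filter.1 (hF.2.2 hs)).1
    have hRΔ : R ⊆ Δ := fun s hs => (mem_filter.1 (hR.2.2 hs)).1
    refine ⟨⟨mem_union_left _ hF.1.1, ?_⟩, ?_, ?_⟩
    · intro s hs t hts
      rcases (mem_union.1 hs) with hs | hs
      · exact mem_union_left _ (hF.1.2 s hs t hts)
      · rcases (memcone R s).1 hs with hs | ⟨u, hu, rfl⟩
        · exact mem_union_right _ ((memcone R t).2 (Or.inl (hR.1.2 s hs t hts)))
        · by_cases hlt : Fin.last n ∈ t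
          · have h1 : t.erase (Fin.last n) ⊆ u := by
              intro a ha
              have ha' := mem_erase.1 ha
              rcases mem_insert.1 (hts ha'.2) with h | h
              · exact absurd h ha'.1
              · exact h
            have h2 : t.erase (Fin.last n) ∈ R := hR.1.2 u hu _ h1
            have h3 : insert (Fin.last n) (t.erase (Fin.last n)) = t :=
              insert_erase hlt
            exact mem_union_right _ ((memcone R t).2 (Or.inr ⟨_, h2, h3⟩))
          · have h1 : t ⊆ u := by
              intro a ha
              rcases mem_insert.1 (hts ha) with h | h
              · exact absurd (h ▸ ha) hlt
              · exact h
            exact mem_union_right _ ((memcone R t).2 (Or.inl (hR.1.2 u hu t h1)))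
    · intro s hs
      have hs' := mem_filter.1 hs
      rcases (memcone Δ s).1 hs'.1 with h | ⟨u, hu, rfl⟩
      · exact mem_union_left _ (hF.2.1 (mem_filter.2 ⟨h, hs'.2⟩))
      · have hc : u.card + 1 ≤ k := by rw [← hcard u hu]; exact hs'.2
        have : u ∈ R := hR.2.1 (mem_filter.2 ⟨hu, by omega⟩)
        exact mem_union_right _ ((memcone R _).2 (Or.inr ⟨u, this, rfl⟩))
    · intro s hs
      rcases mem_union.1 hs with h | h
      · have h' := mem_filter.1 (hF.2.2 h)
        exact mem_filter.2 ⟨(memcone Δ s).2 (Or.inl h'.1), h'.2⟩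
      · rcases (memcone R s).1 h with h | ⟨u, hu, rfl⟩
        · have h' := mem_filter.1 (hR.2.2 h)
          exact mem_filter.2 ⟨(memcone Δ s).2 (Or.inl h'.1), by omega⟩
        · have h' := mem_filter.1 (hR.2.2 hu)
          refine mem_filter.2 ⟨(memcone Δ _).2 (Or.inr ⟨u, h'.1, rfl⟩), ?_⟩
          rw [hcard u h'.1]; omega
  -- part 1
  have part1 : ∀ X, KCplx (coneC Δ) k X →
      KCplx Δ k (X ∩ Δ) ∧ KCplx Δ (k - 1) (linkC Δ X) ∧
        (X ∩ Δ) ∪ coneC (linkC Δ X) = X := by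
    intro X hX
    have hF : KCplx Δ k (X ∩ Δ) := by
      refine ⟨⟨mem_inter.2 ⟨hX.1.1, hΔ.1⟩, ?_⟩, ?_, ?_⟩
      · intro s hs t hts
        have hs' := mem_inter.1 hs
        exact mem_inter.2 ⟨hX.1.2 s hs'.1 t hts, hΔ.2 s hs'.2 t hts⟩
      · intro s hs
        have hs' := mem_filter.1 hs
        exact mem_inter.2 ⟨hX.2.1 (mem_filter.2 ⟨(memcone Δ s).2 (Or.inl hs'.1), hs'.2⟩), hs'.1⟩
      · intro s hs
        have hs' := mem_inter.1 hs
        exact mem_filter.2 ⟨hs'.2, (mem_filter.1 (hX.2.2 hs'.1)).2⟩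
    have hR : KCplx Δ (k-1) (linkC Δ X) := by
      refine ⟨⟨?_, ?_⟩, ?_, ?_⟩
      · refine mem_filter.2 ⟨hΔ.1, ?_⟩
        refine hX.2.1 (mem_filter.2 ⟨(memcone Δ _).2 (Or.inr ⟨∅, hΔ.1, rfl⟩), ?_⟩)
        simpa using hk
      · intro s hs t hts
        have hs' := mem_filter.1 hs
        refine mem_filter.2 ⟨hΔ.2 s hs'.1 t hts, ?_⟩
        exact hX.1.2 _ hs'.2 _ (insert_subset_insert _ hts)
      · intro s hs
        have hs' := mem_filter.1 hs
        refine mem_filter.2 ⟨hs'.1, ?_⟩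
        refine hX.2.1 (mem_filter.2 ⟨(memcone Δ _).2 (Or.inr ⟨s, hs'.1, rfl⟩), ?_⟩)
        rw [hcard s hs'.1]; omega
      · intro s hs
        have hs' := mem_filter.1 hs
        have h1 := mem_filter.1 (hX.2.2 hs'.2)
        have h2 : s.card + 1 ≤ k + 1 := by rw [← hcard s hs'.1]; exact h1.2
        exact mem_filter.2 ⟨hs'.1, by omega⟩
    refine ⟨hF, hR, ?_⟩
    ext t
    simp only [mem_union, mem_inter, memcone, linkC, mem_filter]
    constructor
    · rintro (⟨h, _⟩ | ⟨_, h⟩ | ⟨u, ⟨_, hu⟩, rfl⟩)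
      · exact h
      · exact hX.1.2 _ h _ (subset_insert _ _)
      · exact hu
    · intro ht
      rcases (memcone Δ t).1 (mem_filter.1 (hX.2.2 ht)).1 with h | ⟨u, hu, rfl⟩
      · exact Or.inl ⟨ht, h⟩
      · exact Or.inr (Or.inr ⟨u, ⟨hu, ht⟩, rfl⟩)
  refine ⟨part1, part2, ?_⟩
  rintro ⟨F1, R1⟩ ⟨hF1, hR1⟩ ⟨F2, R2⟩ ⟨hF2, hR2⟩ h
  simp only at h
  have e1 : F1 = F2 := by
    rw [← lemA F1 R1 hF1 hR1, ← lemA F2 R2 hF2 hR2, h]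
  have e2 : R1 = R2 := by
    rw [← lemB F1 R1 hF1 hR1, ← lemB F2 R2 hF2 hR2, h]
  simp [e1, e2]
end

section
/- Let Δ be a simplicial complex on [n], X an (n,k)-complex of Δ, and Y an (n,j)-complex of X. Then any two of the following three conditions imply the third: (1) |X_k| - |Y_k| equals the rank of the relative boundary map ∂_k^{Δ/Y}; (2) the relative Betti numbers satisfy β_{k-1}(X,Y) = β_{k-1}(Δ,Y); (3) β_k(X,Y) = 0. -/
open Finset

lemma bdE_single {n : ℕ} {σ τ : Finset (Fin n)} {x : Fin n} (h : σ ⊆ τ)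
    (hc : σ.card + 1 = τ.card) (hx : τ \ σ = {x}) :
    bdE σ τ = (-1 : ℤ) ^ (τ.filter (fun b => b < x)).card := by
  rw [bdE, if_pos ⟨h, hc⟩, hx, Finset.sum_singleton]

lemma two_terms {n : ℕ} {σ ρ : Finset (Fin n)} {a b : Fin n} (hσρ : σ ⊆ ρ)
    (h2 : σ.card + 2 = ρ.card) (hlt : a < b) (hset : ρ \ σ = {a, b}) :
    bdE σ (insert a σ) * bdE (insert a σ) ρ + bdE σ (insert b σ) * bdE (insert b σ) ρ = 0 := by
  have hab : a ≠ b := hlt.ne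
  have ha : a ∈ ρ \ σ := by rw [hset]; simp
  have hb : b ∈ ρ \ σ := by rw [hset]; simp
  have haσ : a ∉ σ := (Finset.mem_sdiff.mp ha).2
  have hbσ : b ∉ σ := (Finset.mem_sdiff.mp hb).2
  have haρ : a ∈ ρ := (Finset.mem_sdiff.mp ha).1
  have hbρ : b ∈ ρ := (Finset.mem_sdiff.mp hb).1
  have hρ : ρ = insert a (insert b σ) := by
    ext x
    simp only [Finset.mem_insert]
    constructor
    · intro hx
      by_cases hxσ : x ∈ σ
      · exact Or.inr (Or.inr hxσ)
      · have : x ∈ ρ \ σ := Finset.mem_sdiff.mpr ⟨hx, hxσ⟩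
        rw [hset] at this
        simp only [Finset.mem_insert, Finset.mem_singleton] at this
        tauto
    · rintro (rfl | rfl | hx)
      · exact haρ
      · exact hbρ
      · exact hσρ hx
  have hsub_a : insert a σ ⊆ ρ := Finset.insert_subset haρ hσρ
  have hsub_b : insert b σ ⊆ ρ := Finset.insert_subset hbρ hσρ
  have hca : (insert a σ).card = σ.card + 1 := Finset.card_insert_of_notMem haσ
  have hcb : (insert b σ).card = σ.card + 1 := Finset.card_insert_of_notMem hbσ
  have hda : ρ \ insert a σ = {b} := by
    rw [hρ]
    ext x
    simp only [Finset.mem_sdiff, Finset.mem_insert, Finset.mem_singleton]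
    constructor
    · rintro ⟨(rfl | rfl | hx), hx2⟩
      · exact absurd (Or.inl rfl) hx2
      · rfl
      · exact absurd (Or.inr hx) hx2
    · rintro rfl
      exact ⟨Or.inr (Or.inl rfl), fun h => h.elim (fun h => hab h.symm) hbσ⟩
  have hdb : ρ \ insert b σ = {a} := by
    rw [hρ]
    ext x
    simp only [Finset.mem_sdiff, Finset.mem_insert, Finset.mem_singleton]
    constructor
    · rintro ⟨(rfl | rfl | hx), hx2⟩
      · rfl
      · exact absurd (Or.inl rfl) hx2
      · exact absurd (Or.inr hx) hx2
    · rintro rfl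
      exact ⟨Or.inl rfl, fun h => h.elim hab haσ⟩
  rw [bdE_single (Finset.subset_insert a σ) hca.symm (Finset.insert_sdiff_cancel haσ),
      bdE_single (Finset.subset_insert b σ) hcb.symm (Finset.insert_sdiff_cancel hbσ),
      bdE_single hsub_a (by omega) hda, bdE_single hsub_b (by omega) hdb]
  have f1 : (insert a σ).filter (fun x => x < a) = σ.filter (fun x => x < a) := by
    rw [Finset.filter_insert, if_neg (lt_irrefl a)]
  have f2 : (insert b σ).filter (fun x => x < b) = σ.filter (fun x => x < b) := by
    rw [Finset.filter_insert, if_neg (lt_irrefl b)]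
  have f3 : ρ.filter (fun x => x < b) = insert a (σ.filter (fun x => x < b)) := by
    rw [hρ, Finset.filter_insert, if_pos hlt, Finset.filter_insert, if_neg (lt_irrefl b)]
  have f4 : ρ.filter (fun x => x < a) = σ.filter (fun x => x < a) := by
    rw [hρ, Finset.filter_insert, if_neg (lt_irrefl a), Finset.filter_insert,
      if_neg (not_lt.mpr hlt.le)]
  rw [f1, f2, f3, f4, Finset.card_insert_of_notMem (fun h => haσ (Finset.mem_filter.mp h).1)]
  rw [pow_succ]
  ring

lemma key_sum {n : ℕ} (σ ρ : Finset (Fin n)) (h2 : σ.card + 2 = ρ.card)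
    (S : Finset (Finset (Fin n)))
    (hS : ∀ τ, σ ⊆ τ → τ ⊆ ρ → σ.card + 1 = τ.card → τ ∈ S) :
    ∑ τ ∈ S, bdE σ τ * bdE τ ρ = 0 := by
  classical
  have hfil : ∑ τ ∈ S.filter (fun τ => σ ⊆ τ ∧ τ ⊆ ρ ∧ σ.card + 1 = τ.card),
      bdE σ τ * bdE τ ρ = ∑ τ ∈ S, bdE σ τ * bdE τ ρ := by
    apply Finset.sum_filter_of_ne
    intro τ _ hne
    by_contra hP
    apply hne
    by_cases h1 : σ ⊆ τ ∧ σ.card + 1 = τ.card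
    · have h3 : ¬ (τ ⊆ ρ ∧ τ.card + 1 = ρ.card) := fun ⟨h3, _⟩ => hP ⟨h1.1, h3, h1.2⟩
      rw [show bdE τ ρ = 0 from if_neg h3, mul_zero]
    · rw [show bdE σ τ = 0 from if_neg h1, zero_mul]
  rw [← hfil]
  by_cases hσρ : σ ⊆ ρ
  · have hcard2 : (ρ \ σ).card = 2 := by
      rw [Finset.card_sdiff_of_subset hσρ]; omega
    obtain ⟨a, b, hab, hset⟩ := Finset.card_eq_two.mp hcard2
    have hmem : ∀ x, x ∈ ({a, b} : Finset (Fin n)) → σ ⊆ insert x σ ∧ insert x σ ⊆ ρ ∧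
        σ.card + 1 = (insert x σ).card := by
      intro x hx
      have hx' : x ∈ ρ \ σ := hset ▸ hx
      have hxσ : x ∉ σ := (Finset.mem_sdiff.mp hx').2
      exact ⟨Finset.subset_insert x σ,
        Finset.insert_subset (Finset.mem_sdiff.mp hx').1 hσρ,
        (Finset.card_insert_of_notMem hxσ).symm⟩
    have hfeq : S.filter (fun τ => σ ⊆ τ ∧ τ ⊆ ρ ∧ σ.card + 1 = τ.card)
        = {insert a σ, insert b σ} := by
      ext τ
      simp only [Finset.mem_filter, Finset.mem_insert, Finset.mem_singleton]
      constructor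
      · rintro ⟨-, h1, h2', h3⟩
        have hc1 : (τ \ σ).card = 1 := by rw [Finset.card_sdiff_of_subset h1]; omega
        obtain ⟨x, hx⟩ := Finset.card_eq_one.mp hc1
        have hxab : x ∈ ({a, b} : Finset (Fin n)) := by
          rw [← hset]
          exact Finset.sdiff_subset_sdiff h2' Finset.Subset.rfl (hx ▸ Finset.mem_singleton_self x)
        have hτ : τ = insert x σ := by
          rw [← Finset.union_sdiff_of_subset h1, hx]
          ext y
          simp [or_comm]
        rcases Finset.mem_insert.mp hxab with rfl | hxb
        · exact Or.inl hτ
        · exact Or.inr (hτ.trans (by rw [Finset.mem_singleton.mp hxb]))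
      · rintro (rfl | rfl)
        · obtain ⟨p1, p2, p3⟩ := hmem a (by simp)
          exact ⟨hS _ p1 p2 p3, p1, p2, p3⟩
        · obtain ⟨p1, p2, p3⟩ := hmem b (by simp)
          exact ⟨hS _ p1 p2 p3, p1, p2, p3⟩
    have hne : insert a σ ≠ insert b σ := by
      intro h
      have hbσ : b ∉ σ := (Finset.mem_sdiff.mp (hset ▸ (by simp : b ∈ ({a,b} : Finset (Fin n))))).2
      have : b ∈ insert a σ := h ▸ Finset.mem_insert_self b σ
      rcases Finset.mem_insert.mp this with h' | h'
      · exact hab h'.symm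
      · exact hbσ h'
    rw [hfeq, Finset.sum_pair hne]
    rcases hab.lt_or_gt with hlt | hlt
    · exact two_terms hσρ h2 hlt hset
    · rw [add_comm]
      exact two_terms hσρ h2 hlt (hset.trans (Finset.pair_comm a b))
  · rw [Finset.filter_eq_empty_iff.mpr, Finset.sum_empty]
    rintro τ - ⟨h1, h2', -⟩
    exact hσρ (h1.trans h2')

/-- Generic ℚ boundary matrix between two finsets of faces. -/
noncomputable def gM {n : ℕ} (S T : Finset (Finset (Fin n))) : Matrix ↥S ↥T ℚ :=
  fun σ τ => ((bdE σ.1 τ.1 : ℤ) : ℚ)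

lemma mem_relF {n : ℕ} {X Y : Finset (Finset (Fin n))} {c : ℕ} {s : Finset (Fin n)} :
    s ∈ relF X Y c ↔ (s ∈ X ∧ s ∉ Y) ∧ s.card = c := by
  simp [relF, Finset.mem_sdiff, Finset.mem_filter]

lemma gM_rank_mono {n : ℕ} (S : Finset (Finset (Fin n))) {T T' : Finset (Finset (Fin n))}
    (h : T' ⊆ T) : (gM S T').rank ≤ (gM S T).rank := by
  have key : gM S T' = gM S T *
      (1 : Matrix ↥T ↥T ℚ).submatrix (Equiv.refl ↥T) (fun τ => (⟨τ.1, h τ.2⟩ : ↥T)) := by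
    rw [Matrix.mul_submatrix_one]
    rfl
  rw [key]
  exact Matrix.rank_mul_le_left _ _

lemma ddq {n : ℕ} (Δ Y : Finset (Finset (Fin n)))
    (hΔ : ∀ s ∈ Δ, ∀ t ⊆ s, t ∈ Δ) (hY : ∀ s ∈ Y, ∀ t ⊆ s, t ∈ Y) (k : ℕ) :
    gM (relF Δ Y (k - 1)) (relF Δ Y k) * gM (relF Δ Y k) (relF Δ Y (k + 1)) = 0 := by
  ext σ ρ
  simp only [Matrix.mul_apply, gM, Matrix.zero_apply]
  have hcast : ∀ τ : ↥(relF Δ Y k),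
      ((bdE σ.1 τ.1 : ℤ) : ℚ) * ((bdE τ.1 ρ.1 : ℤ) : ℚ)
        = (((bdE σ.1 τ.1 * bdE τ.1 ρ.1 : ℤ)) : ℚ) := by intro τ; push_cast; ring
  rw [Finset.sum_congr rfl (fun τ _ => hcast τ), ← Int.cast_sum,
    Finset.sum_coe_sort (relF Δ Y k) (fun t => bdE σ.1 t * bdE t ρ.1)]
  have hσ := (mem_relF.mp σ.2).2
  have hρ := (mem_relF.mp ρ.2).2
  suffices h : ∑ t ∈ relF Δ Y k, bdE (σ.1) t * bdE t (ρ.1) = 0 by rw [h, Int.cast_zero]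
  rcases k with _ | k'
  · apply Finset.sum_eq_zero
    intro τ hτ
    have hτc := (mem_relF.mp hτ).2
    rw [show bdE σ.1 τ = 0 from if_neg (fun hh => by omega), zero_mul]
  · apply key_sum _ _ (by omega)
    intro τ h1 h2 h3
    rw [mem_relF]
    exact ⟨⟨hΔ _ (mem_relF.mp ρ.2).1.1 _ h2, fun hτY => (mem_relF.mp σ.2).1.2 (hY _ hτY _ h1)⟩,
      by omega⟩

/-- Two-out-of-three lemma for relative forests: for a complex `Δ`, an `(n,k)`-complex `X`
of `Δ`, and an `(n,j)`-complex `Y` of `X`, any two of the following imply the third: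
(1) `|X_k| − |Y_k| = rank ∂_k^{Δ/Y}`; (2) `β_{k-1}(X,Y) = β_{k-1}(Δ,Y)`;
(3) `β_k(X,Y) = 0`.  (Dimension-`k` data lives at cardinality level `k+1`.) -/
theorem stmt4 (n k j : ℕ) (Δ X Y : Finset (Finset (Fin n)))
    (hΔ : IsComplex Δ) (hX : KCplx Δ k X) (hY : KCplx X j Y) :
    ((((cF X (k + 1)).card : ℤ) - (cF Y (k + 1)).card = (qMat Δ Y (k + 1)).rank ∧
        bettiL X Y k = bettiL Δ Y k) →
      bettiL X Y (k + 1) = 0) ∧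
    ((((cF X (k + 1)).card : ℤ) - (cF Y (k + 1)).card = (qMat Δ Y (k + 1)).rank ∧
        bettiL X Y (k + 1) = 0) →
      bettiL X Y k = bettiL Δ Y k) ∧
    ((bettiL X Y k = bettiL Δ Y k ∧ bettiL X Y (k + 1) = 0) →
      ((cF X (k + 1)).card : ℤ) - (cF Y (k + 1)).card = (qMat Δ Y (k + 1)).rank) := by
  obtain ⟨hXc, hXl, hXu⟩ := hX
  obtain ⟨hYc, hYl, hYu⟩ := hY
  have hYX : Y ⊆ X := hYu.trans (Finset.filter_subset _ _)
  have hrel : ∀ c, c ≤ k → relF X Y c = relF Δ Y c := by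
    intro c hc
    ext s
    rw [mem_relF, mem_relF]
    constructor
    · rintro ⟨⟨hsX, hsY⟩, hcs⟩
      exact ⟨⟨(Finset.mem_filter.mp (hXu hsX)).1, hsY⟩, hcs⟩
    · rintro ⟨⟨hsΔ, hsY⟩, hcs⟩
      exact ⟨⟨hXl (Finset.mem_filter.mpr ⟨hsΔ, by omega⟩), hsY⟩, hcs⟩
  have hk : relF X Y k = relF Δ Y k := hrel k le_rfl
  have hk1 : relF X Y (k - 1) = relF Δ Y (k - 1) := hrel _ (Nat.sub_le k 1)
  have hsub : relF X Y (k + 1) ⊆ relF Δ Y (k + 1) := by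
    intro s hs
    obtain ⟨⟨hsX, hsY⟩, hcs⟩ := mem_relF.mp hs
    exact mem_relF.mpr ⟨⟨(Finset.mem_filter.mp (hXu hsX)).1, hsY⟩, hcs⟩
  have hempty : relF X Y (k + 1 + 1) = ∅ := by
    rw [Finset.eq_empty_iff_forall_notMem]
    intro s hs
    obtain ⟨⟨hsX, hsY⟩, hcs⟩ := mem_relF.mp hs
    have := (Finset.mem_filter.mp (hXu hsX)).2
    omega
  have hcFsub : cF Y (k + 1) ⊆ cF X (k + 1) := Finset.filter_subset_filter _ hYX
  have hrelcF : relF X Y (k + 1) = cF X (k + 1) \ cF Y (k + 1) := by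
    ext s
    simp only [relF, cF, Finset.mem_filter, Finset.mem_sdiff]
    tauto
  have hmz : ((cF X (k + 1)).card : ℤ) - (cF Y (k + 1)).card
      = ((relF X Y (k + 1)).card : ℤ) := by
    rw [hrelcF, Finset.card_sdiff_of_subset hcFsub]
    have := Finset.card_le_card hcFsub
    push_cast [Nat.cast_sub this]
    ring
  have e1 : (qMat X Y k).rank = (qMat Δ Y k).rank := by
    have l1 : (qMat X Y k).rank = (gM (relF X Y (k - 1)) (relF X Y k)).rank := rfl
    have l2 : (qMat Δ Y k).rank = (gM (relF Δ Y (k - 1)) (relF Δ Y k)).rank := rfl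
    rw [l1, l2, hk, hk1]
  have e2 : (qMat X Y (k + 1)).rank ≤ (qMat Δ Y (k + 1)).rank := by
    have l1 : (qMat X Y (k + 1)).rank = (gM (relF X Y k) (relF X Y (k + 1))).rank := rfl
    have l2 : (qMat Δ Y (k + 1)).rank = (gM (relF Δ Y k) (relF Δ Y (k + 1))).rank := rfl
    rw [l1, l2, hk]
    exact gM_rank_mono _ hsub
  have e3 : (qMat X Y (k + 1 + 1)).rank = 0 := by
    have h := Matrix.rank_le_card_width (qMat X Y (k + 1 + 1))
    rw [Fintype.card_coe] at h
    have hc0 : (relF X Y (k + 1 + 1)).card = 0 := by rw [hempty]; rfl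
    omega
  have e5 : (qMat X Y (k + 1)).rank ≤ (relF X Y (k + 1)).card := by
    have h := Matrix.rank_le_card_width (qMat X Y (k + 1))
    rwa [Fintype.card_coe] at h
  have e4 : (qMat Δ Y k).rank + (qMat Δ Y (k + 1)).rank ≤ (relF Δ Y k).card := by
    have hprod := ddq Δ Y hΔ.2 hYc.2 k
    have h := Matrix.rank_add_rank_le_card_of_mul_eq_zero hprod
    rw [Fintype.card_coe] at h
    have l1 : (qMat Δ Y k).rank = (gM (relF Δ Y (k - 1)) (relF Δ Y k)).rank := rfl
    have l2 : (qMat Δ Y (k + 1)).rank = (gM (relF Δ Y k) (relF Δ Y (k + 1))).rank := rfl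
    rw [l1, l2]
    exact h
  have hck : (relF X Y k).card = (relF Δ Y k).card := by rw [hk]
  refine ⟨fun ⟨h1, h2⟩ => ?_, fun ⟨h1, h2⟩ => ?_, fun ⟨h1, h2⟩ => ?_⟩
  · rw [hmz] at h1
    have h1' : (relF X Y (k + 1)).card = (qMat Δ Y (k + 1)).rank := by exact_mod_cast h1
    simp only [bettiL] at h2 ⊢
    omega
  · rw [hmz] at h1
    have h1' : (relF X Y (k + 1)).card = (qMat Δ Y (k + 1)).rank := by exact_mod_cast h1
    simp only [bettiL] at h2 ⊢
    omega
  · simp only [bettiL] at h1 h2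
    rw [hmz]
    have h1' : (relF X Y (k + 1)).card = (qMat Δ Y (k + 1)).rank := by omega
    exact_mod_cast h1'
end

section
/- Let Δ be a simplicial complex on [n], F an (n,k)-complex of Δ, and R an (n,k-1)-complex of Δ with |F_k| = |Δ_{k-1} \ R_{k-1}|. Write R̄ = Δ_{k-1} \ R_{k-1}, and let ∂_{R̄,F_k} be the square submatrix of the boundary matrix with rows R̄ and columns F_k. Then the following are equivalent: (1) det ∂_{R̄,F_k} ≠ 0; (2) |det ∂_{R̄,F_k}| = |H_{k-1}(F,R)| (the order of the finite relative homology group); (3) (F,R) is a rooted (n,k)-forest of Δ. -/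
open Finset

/-! Since `F ⊇ Δ_{≤ k-1}` and `R ⊇ Δ_{≤ k-2}`, while `F` has no faces above dimension `k` and
`R` none above dimension `k-1`, the relative chain complex of `(F,R)` is `ℤ^{F_k} → ℤ^{R̄}`, whose
only differential is `∂_{R̄,F_k}` up to the reindexing `e`. Hence `H_{k-1}(F,R)` is the cokernel
of this square matrix, which by the Smith normal form is finite of order `|det|` exactly when
`det ≠ 0`; and both relative Betti numbers equal `|R̄| - rank_ℚ ∂_{R̄,F_k}`, which vanishes exactly
when the matrix is nonsingular. -/

namespace Matrix

variable {ι : Type*} [Fintype ι] [DecidableEq ι]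

theorem toLin'_injective_of_det_ne_zero {R : Type*} [CommRing R] [IsDomain R]
    {A : Matrix ι ι R} (hA : A.det ≠ 0) : Function.Injective (toLin' A) := by
  rw [← LinearMap.ker_eq_bot, ker_toLin'_eq_bot_iff]
  intro v hv
  by_contra h
  exact hA (exists_mulVec_eq_zero_iff.mp ⟨v, h, hv⟩)

theorem natCard_quotient_range_toLin' {A : Matrix ι ι ℤ} (hA : A.det ≠ 0) :
    Nat.card ((ι → ℤ) ⧸ LinearMap.range (toLin' A)) = A.det.natAbs := by
  rw [← Submodule.natAbs_det_equiv _
    (LinearEquiv.ofInjective _ (toLin'_injective_of_det_ne_zero hA)), ← LinearMap.det_toLin' A]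
  rfl

theorem det_ne_zero_iff_finite_quotient_range_toLin' (A : Matrix ι ι ℤ) :
    A.det ≠ 0 ↔ Finite ((ι → ℤ) ⧸ LinearMap.range (toLin' A)) ∧
      Nat.card ((ι → ℤ) ⧸ LinearMap.range (toLin' A)) = A.det.natAbs := by
  refine ⟨fun hA => ⟨?_, natCard_quotient_range_toLin' hA⟩, fun ⟨_, hcard⟩ hA => ?_⟩
  · apply Nat.finite_of_card_ne_zero
    rw [natCard_quotient_range_toLin' hA]
    exact Int.natAbs_ne_zero.mpr hA
  · rw [hA, Int.natAbs_zero] at hcard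
    exact Nat.card_ne_zero.mpr ⟨inferInstance, inferInstance⟩ hcard

theorem rank_eq_card_iff_det_ne_zero {K : Type*} [Field K] (A : Matrix ι ι K) :
    A.rank = Fintype.card ι ↔ A.det ≠ 0 := by
  refine ⟨fun h hdet => ?_, rank_of_det_ne_zero⟩
  obtain ⟨v, hv, hAv⟩ := exists_mulVec_eq_zero_iff.mpr hdet
  have hker := LinearMap.finrank_range_add_finrank_ker A.mulVecLin
  rw [← rank, h, Module.finrank_fintype_fun_eq_card, add_eq_left, Submodule.finrank_eq_zero,
    LinearMap.ker_eq_bot'] at hker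
  exact hv (hker v hAv)

theorem rank_map_intCast_eq_card_iff (A : Matrix ι ι ℤ) :
    (A.map (Int.cast : ℤ → ℚ)).rank = Fintype.card ι ↔ A.det ≠ 0 := by
  rw [rank_eq_card_iff_det_ne_zero, ← Int.cast_ne_zero (α := ℚ), Int.cast_det]

noncomputable def quotientRangeToLin'ReindexEquiv {R : Type*} [CommRing R] {m k l : Type*}
    [Fintype l] [DecidableEq l] (e₁ : k ≃ m) (e₂ : l ≃ ι) (A : Matrix k l R) :
    ((k → R) ⧸ LinearMap.range (toLin' A)) ≃ₗ[R]
      ((m → R) ⧸ LinearMap.range (toLin' (reindex e₁ e₂ A))) :=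
  Submodule.Quotient.equiv _ _ (LinearEquiv.funCongrLeft R R e₁.symm) <| by
    rw [toLin'_reindex, LinearMap.range_comp, LinearMap.range_comp, LinearEquiv.range,
      Submodule.map_top]

end Matrix

section RelativeHomology

variable {n : ℕ} {X Y : Finset (Finset (Fin n))} {c : ℕ}

theorem rank_qMat_eq_zero_of_relF_pred_eq_empty (h : relF X Y (c - 1) = ∅) :
    (qMat X Y c).rank = 0 := by
  simpa [h] using (qMat X Y c).rank_le_card_height

theorem rank_qMat_eq_zero_of_relF_eq_empty (h : relF X Y c = ∅) : (qMat X Y c).rank = 0 := by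
  simpa [h] using (qMat X Y c).rank_le_card_width

theorem bettiL_eq_of_relF_pred_eq_empty (h : relF X Y (c - 1) = ∅) :
    bettiL X Y c = (relF X Y c).card - (qMat X Y (c + 1)).rank := by
  rw [bettiL, rank_qMat_eq_zero_of_relF_pred_eq_empty h, Nat.sub_zero]

theorem bettiL_succ_eq_of_relF_add_two_eq_empty (h : relF X Y (c + 2) = ∅) :
    bettiL X Y (c + 1) = (relF X Y (c + 1)).card - (qMat X Y (c + 1)).rank := by
  rw [bettiL, rank_qMat_eq_zero_of_relF_eq_empty h, Nat.sub_zero]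

noncomputable def relHEquivOfRelFPredEqEmpty (h : relF X Y (c - 1) = ∅) :
    RelH X Y c ≃ₗ[ℤ] (↥(relF X Y c) → ℤ) ⧸ LinearMap.range (dLin X Y (c + 1)) :=
  have hker : LinearMap.ker (dLin X Y c) = ⊤ := by
    have : IsEmpty ↥(relF X Y (c - 1)) := Finset.isEmpty_coe_sort.mpr h
    exact LinearMap.ker_eq_top.mpr (Subsingleton.elim _ _)
  Submodule.Quotient.equiv _ _ (LinearEquiv.ofTop _ hker) <| by
    have hsub : (LinearEquiv.ofTop _ hker : LinearMap.ker (dLin X Y c) →ₗ[ℤ] _) =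
        (LinearMap.ker (dLin X Y c)).subtype := rfl
    rw [hsub, Submodule.map_comap_subtype, hker, top_inf_eq]

end RelativeHomology

namespace KCplx

variable {n k : ℕ} {Δ X : Finset (Finset (Fin n))}

theorem subset (h : KCplx Δ k X) : X ⊆ Δ := fun _ hs => (mem_filter.mp (h.2.2 hs)).1

theorem card_le (h : KCplx Δ k X) {s : Finset (Fin n)} (hs : s ∈ X) : s.card ≤ k + 1 :=
  (mem_filter.mp (h.2.2 hs)).2

theorem mem_of_card_le (h : KCplx Δ k X) {s : Finset (Fin n)} (hs : s ∈ Δ) (hc : s.card ≤ k) :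
    s ∈ X :=
  h.2.1 (mem_filter.mpr ⟨hs, hc⟩)

end KCplx

section Forest

variable {n k : ℕ} {Δ F R : Finset (Finset (Fin n))}

theorem relF_pred_eq_empty (hF : KCplx Δ k F) (hR : KCplx Δ (k - 1) R) :
    relF F R (k - 1) = ∅ := by
  ext s
  simp only [relF, mem_filter, mem_sdiff, notMem_empty, iff_false]
  rintro ⟨⟨hsF, hsR⟩, hs⟩
  exact hsR (hR.mem_of_card_le (hF.subset hsF) hs.le)

theorem relF_eq_relF_of_kCplx (hF : KCplx Δ k F) (R : Finset (Finset (Fin n))) :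
    relF F R k = relF Δ R k := by
  ext s
  simp only [relF, mem_filter, mem_sdiff]
  exact ⟨fun ⟨⟨hsF, hsR⟩, hs⟩ => ⟨⟨hF.subset hsF, hsR⟩, hs⟩,
    fun ⟨⟨hsΔ, hsR⟩, hs⟩ => ⟨⟨hF.mem_of_card_le hsΔ hs.le, hsR⟩, hs⟩⟩

theorem relF_succ_eq_cF (hk : 1 ≤ k) (hR : KCplx Δ (k - 1) R) (F : Finset (Finset (Fin n))) :
    relF F R (k + 1) = cF F (k + 1) := by
  ext s
  simp only [relF, cF, mem_filter, mem_sdiff]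
  refine ⟨fun ⟨⟨hsF, _⟩, hs⟩ => ⟨hsF, hs⟩, fun ⟨hsF, hs⟩ => ⟨⟨hsF, fun hsR => ?_⟩, hs⟩⟩
  have := hR.card_le hsR
  omega

theorem relF_add_two_eq_empty (hF : KCplx Δ k F) (R : Finset (Finset (Fin n))) :
    relF F R (k + 2) = ∅ := by
  ext s
  simp only [relF, mem_filter, mem_sdiff, notMem_empty, iff_false]
  rintro ⟨⟨hsF, _⟩, hs⟩
  have := hF.card_le hsF
  omega

end Forest

theorem stmt6_general (n k : ℕ) (hk : 1 ≤ k) (Δ F R : Finset (Finset (Fin n)))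
    (hF : KCplx Δ k F) (hR : KCplx Δ (k - 1) R)
    (e : ↥(relF Δ R k) ≃ ↥(cF F (k + 1))) :
    ((Matrix.of fun (σ τ : ↥(relF Δ R k)) => bdE σ.1 (e τ).1).det ≠ 0 ↔
      (Finite (RelH F R k) ∧
        Nat.card (RelH F R k) =
          ((Matrix.of fun (σ τ : ↥(relF Δ R k)) => bdE σ.1 (e τ).1).det).natAbs)) ∧
    ((Matrix.of fun (σ τ : ↥(relF Δ R k)) => bdE σ.1 (e τ).1).det ≠ 0 ↔
      (bettiL F R k = 0 ∧ bettiL F R (k + 1) = 0)) := by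
  set M : Matrix ↥(relF Δ R k) ↥(relF Δ R k) ℤ := Matrix.of fun σ τ => bdE σ.1 (e τ).1
  have hrows : relF F R k = relF Δ R k := relF_eq_relF_of_kCplx hF R
  let eRows : ↥(relF F R k) ≃ ↥(relF Δ R k) := Equiv.subtypeEquivRight (by simp [hrows])
  let eCols : ↥(relF F R (k + 1)) ≃ ↥(relF Δ R k) :=
    (Equiv.subtypeEquivRight (by simp [relF_succ_eq_cF hk hR F])).trans e.symm
  have hdMat : dMat F R (k + 1) = Matrix.reindex eRows.symm eCols.symm M := by
    ext σ τ
    simp [M, eRows, eCols, dMat]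
  let H : RelH F R k ≃ₗ[ℤ] (↥(relF Δ R k) → ℤ) ⧸ LinearMap.range (Matrix.toLin' M) :=
    (relHEquivOfRelFPredEqEmpty (relF_pred_eq_empty hF hR)).trans <|
      (Submodule.quotEquivOfEq _ _ (by rw [dLin, hdMat])).trans
        (Matrix.quotientRangeToLin'ReindexEquiv eRows.symm eCols.symm M).symm
  have hrank : (qMat F R (k + 1)).rank = (M.map (Int.cast : ℤ → ℚ)).rank := by
    rw [qMat, hdMat, Matrix.reindex_apply, ← Matrix.submatrix_map, Matrix.rank_submatrix]
  have hcard : (relF F R (k + 1)).card = (relF Δ R k).card := by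
    simpa using Fintype.card_congr eCols
  refine ⟨?_, ?_⟩
  · rw [M.det_ne_zero_iff_finite_quotient_range_toLin', H.toEquiv.finite_iff,
      Nat.card_congr H.toEquiv]
  · rw [bettiL_eq_of_relF_pred_eq_empty (relF_pred_eq_empty hF hR),
      bettiL_succ_eq_of_relF_add_two_eq_empty (relF_add_two_eq_empty hF R), hrank, hcard, hrows,
      and_self, Nat.sub_eq_zero_iff_le, ← M.rank_map_intCast_eq_card_iff, Fintype.card_coe]
    exact ⟨fun h => h.ge, le_antisymm (by simpa using (M.map Int.cast).rank_le_card_height)⟩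

/-- Determinant criterion for rooted forests: let `F` be an `(n,k)`-complex and `R` an
`(n,k-1)`-complex of `Δ` with `|F_k| = |Δ_{k-1} \ R_{k-1}|`, and let `D` be the determinant
of the square submatrix of the boundary matrix with rows `R̄ = Δ_{k-1} \ R_{k-1}` and columns
`F_k` (with respect to any identification `e` of the two index sets; all the statements below
are independent of the choice).  Then the following are equivalent: (1) `D ≠ 0`;
(2) `H_{k-1}(F,R)` is finite of order `|D|`; (3) `(F,R)` is a rooted `(n,k)`-forest of `Δ`,
i.e. `β_{k-1}(F,R) = β_k(F,R) = 0`. -/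
theorem stmt6 (n k : ℕ) (hk : 1 ≤ k) (Δ F R : Finset (Finset (Fin n)))
    (hΔ : IsComplex Δ) (hF : KCplx Δ k F) (hR : KCplx Δ (k - 1) R)
    (hcard : (cF F (k + 1)).card = (relF Δ R k).card)
    (e : ↥(relF Δ R k) ≃ ↥(cF F (k + 1))) :
    ((Matrix.of fun (σ τ : ↥(relF Δ R k)) => bdE σ.1 (e τ).1).det ≠ 0 ↔
      (Finite (RelH F R k) ∧
        Nat.card (RelH F R k) =
          ((Matrix.of fun (σ τ : ↥(relF Δ R k)) => bdE σ.1 (e τ).1).det).natAbs)) ∧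
    ((Matrix.of fun (σ τ : ↥(relF Δ R k)) => bdE σ.1 (e τ).1).det ≠ 0 ↔
      (bettiL F R k = 0 ∧ bettiL F R (k + 1) = 0)) :=
  stmt6_general n k hk Δ F R hF hR e
end

section
/- Let Δ be a simplicial complex on [n-1]. The binomial correspondence X ↦ (Proj(n,X), Link(n,X)) restricts to a bijection between the k-dimensional spanning trees of Cone(n,Δ) and the rooted (n-1,k)-forests of Δ. In particular, for F ∪ Cone(n,R) with F an (n-1,k)-complex and R an (n-1,k-1)-complex of Δ: F ∪ Cone(n,R) is a k-tree of Cone(n,Δ) if and only if (F,R) is a rooted (n-1,k)-forest of Δ. -/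
open Finset

/-- `X` is a `k`-dimensional spanning tree of `Γ`: an `(n,k)`-complex of `Γ` with
`β_k(X) = 0` and `|X_k| = rank ∂_k^Γ`. -/
def IsTree {n : ℕ} (Γ : Finset (Finset (Fin n))) (k : ℕ) (X : Finset (Finset (Fin n))) : Prop :=
  KCplx Γ k X ∧ bettiL X ∅ (k + 1) = 0 ∧ (cF X (k + 1)).card = (qMat Γ ∅ (k + 1)).rank

/-!
Write `ν = Fin.last n`, `X = F ∪ Cone(R)` and `R_c` for the `c`-element faces of `R`. The
`(c+1)`-element faces of `X` are those of `F` and the cones `ν σ` with `σ ∈ R_c`, and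
`∂(ν σ) = (-1)^c σ + ν ∂σ`. Hence a chain `f` on `X` is a cycle iff its restriction to `F` is a
relative cycle of `(F, R)` and `f(ν σ) = -(-1)^c (∂ f|_F)(σ)` for `σ ∈ R_c`: the equations
indexed by the cone faces then hold because `∂ ∘ ∂ = 0`. So `dim Z_{c+1}(X) = |R_{c+1}| +
dim Z_{c+1}(F, R)`, and rank–nullity gives `rank ∂^X_{c+1} = rank ∂^{(F,R)}_{c+1} + |R_c|`; for
`F = R = Δ` this is `rank ∂^{Cone Δ}_{c+1} = |Δ_c|`. With `c = k`, both the tree conditions on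
`X` and the vanishing of `β_{k-1}(F, R)`, `β_k(F, R)` say `rank ∂^{(F,R)}_{k+1} = |F_{k+1}| =
|Δ_k| - |R_k|`. Finally every `(n,k)`-complex `X` of `Cone(Δ)` equals
`Proj(n,X) ∪ Cone(Link(n,X))`, which makes the correspondence bijective.
-/

section Boundary

variable {m : ℕ} {ρ σ τ : Finset (Fin m)}

lemma bdE_eq_zero_of_not_subset (h : ¬σ ⊆ τ) : bdE σ τ = 0 :=
  if_neg fun h' => h h'.1

lemma bdE_eq_zero_of_forall_insert_ne (h : ∀ a ∉ σ, insert a σ ≠ τ) : bdE σ τ = 0 :=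
  if_neg fun h' => by
    obtain ⟨a, ha, e⟩ := exists_eq_insert_iff.2 h'
    exact h a ha e

lemma exists_eq_insert_of_bdE_ne_zero (h : bdE σ τ ≠ 0) : ∃ a ∉ σ, insert a σ = τ := by
  by_contra h'
  exact h (bdE_eq_zero_of_forall_insert_ne fun a ha e => h' ⟨a, ha, e⟩)

lemma bdE_insert {a : Fin m} (ha : a ∉ σ) :
    bdE σ (insert a σ) = (-1) ^ (σ.filter (· < a)).card := by
  rw [bdE, if_pos ⟨subset_insert _ _, (card_insert_of_notMem ha).symm⟩, insert_sdiff_cancel ha,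
    sum_singleton, filter_insert, if_neg (lt_irrefl a)]

lemma bdE_insert_mul_add_bdE_insert_mul {a b : Fin m} (hab : a < b) (ha : a ∉ ρ) (hb : b ∉ ρ) :
    bdE ρ (insert a ρ) * bdE (insert a ρ) (insert a (insert b ρ)) +
      bdE ρ (insert b ρ) * bdE (insert b ρ) (insert a (insert b ρ)) = 0 := by
  rw [insert_comm a b, bdE_insert ha, bdE_insert hb, bdE_insert (by simp [hab.ne', hb]),
    insert_comm b a, bdE_insert (by simp [hab.ne, ha]), filter_insert, if_pos hab, filter_insert,
    if_neg (not_lt.2 hab.le), card_insert_of_notMem (by simp [ha]), pow_succ]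
  ring

/-- `∂ ∘ ∂ = 0`, entrywise. -/
theorem sum_powerset_bdE_mul_bdE (ρ τ : Finset (Fin m)) :
    ∑ σ ∈ τ.powerset, bdE ρ σ * bdE σ τ = 0 := by
  by_cases hρτ : ρ ⊆ τ ∧ ρ.card + 2 = τ.card
  swap
  · refine sum_eq_zero fun σ _ => ?_
    by_contra hne
    obtain ⟨a, ha, rfl⟩ := exists_eq_insert_of_bdE_ne_zero (left_ne_zero_of_mul hne)
    obtain ⟨b, hb, rfl⟩ := exists_eq_insert_of_bdE_ne_zero (right_ne_zero_of_mul hne)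
    exact hρτ ⟨(subset_insert _ _).trans (subset_insert _ _),
      by rw [card_insert_of_notMem hb, card_insert_of_notMem ha]⟩
  obtain ⟨a, b, hab, hτρ⟩ := card_eq_two.1 (by rw [card_sdiff_of_subset hρτ.1]; omega :
    (τ \ ρ).card = 2)
  wlog hlt : a < b generalizing a b
  · exact this b a hab.symm (by rw [hτρ, pair_comm]) (hab.lt_or_gt.resolve_left hlt)
  have hmem : ∀ x, x ∈ τ \ ρ ↔ x = a ∨ x = b := by simp [hτρ]
  have ha := mem_sdiff.1 ((hmem a).2 (.inl rfl))
  have hb := mem_sdiff.1 ((hmem b).2 (.inr rfl))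
  have hτ : τ = insert a (insert b ρ) := by
    rw [← union_sdiff_of_subset hρτ.1, hτρ]; ext; simp
  have hsub : {insert a ρ, insert b ρ} ⊆ τ.powerset := by
    simp [insert_subset_iff, ha.1, hb.1, hρτ.1]
  rw [← sum_subset hsub, sum_pair, hτ]
  · exact bdE_insert_mul_add_bdE_insert_mul hlt ha.2 hb.2
  · exact fun h => hab ((insert_inj ha.2).1 h)
  · intro σ hσ hσab
    by_contra hne
    obtain ⟨x, hx, rfl⟩ := exists_eq_insert_of_bdE_ne_zero (left_ne_zero_of_mul hne)
    have := (hmem x).1 (mem_sdiff.2 ⟨mem_powerset.1 hσ (mem_insert_self x ρ), hx⟩)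
    rcases this with rfl | rfl <;> simp at hσab

end Boundary

section Chains

variable {m : ℕ}

lemma sum_cF_bdE_mul_bdE {K : Finset (Finset (Fin m))} (hK : IsLowerSet (K : Set (Finset (Fin m))))
    {τ : Finset (Fin m)} (hτ : τ ∈ K) (ρ : Finset (Fin m)) (c : ℕ) :
    ∑ σ ∈ cF K c, bdE ρ σ * bdE σ τ = 0 := by
  have hfilter : ∀ S : Finset (Finset (Fin m)),
      ∑ σ ∈ S.filter (fun σ => σ ⊆ τ ∧ σ.card + 1 = τ.card), bdE ρ σ * bdE σ τ =
        ∑ σ ∈ S, bdE ρ σ * bdE σ τ :=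
    fun S => sum_filter_of_ne fun σ _ h => by
      by_contra h'
      exact h (by rw [show bdE σ τ = 0 from if_neg h', mul_zero])
  rw [← hfilter (cF K c)]
  by_cases hc : τ.card = c + 1
  · have hS : (cF K c).filter (fun σ => σ ⊆ τ ∧ σ.card + 1 = τ.card) =
        τ.powerset.filter (fun σ => σ ⊆ τ ∧ σ.card + 1 = τ.card) := by
      ext σ
      simp only [cF, mem_filter, mem_powerset]
      exact ⟨fun h => ⟨h.2.1, h.2⟩, fun h => ⟨⟨hK h.1 hτ, by omega⟩, h.2⟩⟩
    rw [hS, hfilter, sum_powerset_bdE_mul_bdE]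
  · rw [filter_false_of_mem fun σ hσ h => hc (by simp only [cF, mem_filter] at hσ; omega),
      sum_empty]

/-- `bd S g ρ` is the coefficient of `ρ` in the boundary of the chain `g` restricted to `S`. -/
def bd (S : Finset (Finset (Fin m))) (g : Finset (Fin m) → ℚ) (ρ : Finset (Fin m)) : ℚ :=
  ∑ τ ∈ S, (bdE ρ τ : ℚ) * g τ

theorem bd_cF_bd_cF {K : Finset (Finset (Fin m))} (hK : IsLowerSet (K : Set (Finset (Fin m))))
    (c : ℕ) (g : Finset (Fin m) → ℚ) : bd (cF K c) (bd (cF K (c + 1)) g) = 0 := by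
  funext ρ
  simp only [bd, mul_sum, ← mul_assoc]
  rw [sum_comm]
  refine sum_eq_zero fun τ hτ => ?_
  rw [← sum_mul]
  norm_cast
  rw [sum_cF_bdE_mul_bdE hK (mem_filter.1 hτ).1]
  simp

def extendZero (S : Finset (Finset (Fin m))) (x : S → ℚ) (τ : Finset (Fin m)) : ℚ :=
  if h : τ ∈ S then x ⟨τ, h⟩ else 0

@[simp]
lemma extendZero_coe {S : Finset (Finset (Fin m))} (x : S → ℚ) (τ : S) :
    extendZero S x τ = x τ :=
  dif_pos τ.2

lemma extendZero_of_mem {S : Finset (Finset (Fin m))} (x : S → ℚ) {τ : Finset (Fin m)}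
    (h : τ ∈ S) : extendZero S x τ = x ⟨τ, h⟩ :=
  dif_pos h

lemma extendZero_of_notMem {S : Finset (Finset (Fin m))} (x : S → ℚ) {τ : Finset (Fin m)}
    (h : τ ∉ S) : extendZero S x τ = 0 :=
  dif_neg h

lemma qMat_mulVec_apply {X Y : Finset (Finset (Fin m))} {c : ℕ} (x : relF X Y c → ℚ)
    (ρ : relF X Y (c - 1)) : (qMat X Y c).mulVec x ρ = bd (relF X Y c) (extendZero _ x) ρ := by
  rw [bd, ← sum_coe_sort]
  simp [Matrix.mulVec, dotProduct, qMat, dMat]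

lemma mem_ker_qMat_iff {X Y : Finset (Finset (Fin m))} {c : ℕ} {x : relF X Y c → ℚ} :
    x ∈ LinearMap.ker (qMat X Y c).mulVecLin ↔
      ∀ ρ ∈ relF X Y (c - 1), bd (relF X Y c) (extendZero _ x) ρ = 0 := by
  simp only [LinearMap.mem_ker, Matrix.mulVecLin_apply, funext_iff, qMat_mulVec_apply,
    Pi.zero_apply, Subtype.forall]

lemma cF_subset {X : Finset (Finset (Fin m))} {c : ℕ} : cF X c ⊆ X :=
  filter_subset _ _

lemma relF_empty (X : Finset (Finset (Fin m))) (c : ℕ) : relF X ∅ c = cF X c := by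
  rw [relF, cF, sdiff_empty]

lemma bd_congr {S : Finset (Finset (Fin m))} {f g : Finset (Fin m) → ℚ}
    (h : ∀ τ ∈ S, f τ = g τ) : bd S f = bd S g :=
  funext fun _ => sum_congr rfl fun τ hτ => by rw [h τ hτ]

lemma mem_ker_qMat_empty_iff {X : Finset (Finset (Fin m))} {c : ℕ}
    {x : relF X ∅ (c + 1) → ℚ} :
    x ∈ LinearMap.ker (qMat X ∅ (c + 1)).mulVecLin ↔
      ∀ ρ ∈ cF X c, bd (cF X (c + 1)) (extendZero _ x) ρ = 0 := by
  rw [mem_ker_qMat_iff, Nat.add_sub_cancel, relF_empty X c,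
    show bd (relF X ∅ (c + 1)) = bd (cF X (c + 1)) by rw [relF_empty]]

lemma rank_add_finrank_ker_qMat {m : ℕ} (X Y : Finset (Finset (Fin m))) (c : ℕ) :
    (qMat X Y c).rank + Module.finrank ℚ (LinearMap.ker (qMat X Y c).mulVecLin) =
      (relF X Y c).card := by
  rw [Matrix.rank, LinearMap.finrank_range_add_finrank_ker, Module.finrank_fintype_fun_eq_card,
    Fintype.card_coe]

lemma rank_qMat_le_card_relF {m : ℕ} (X Y : Finset (Finset (Fin m))) (c : ℕ) :
    (qMat X Y c).rank ≤ (relF X Y c).card :=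
  (Matrix.rank_le_card_width _).trans_eq (Fintype.card_coe _)

lemma rank_qMat_le_card_relF_sub_one {m : ℕ} (X Y : Finset (Finset (Fin m))) (c : ℕ) :
    (qMat X Y c).rank ≤ (relF X Y (c - 1)).card :=
  (Matrix.rank_le_card_height _).trans_eq (Fintype.card_coe _)

end Chains

section Cone

variable {n : ℕ} {F R : Finset (Finset (Fin (n + 1)))} {ρ σ τ : Finset (Fin (n + 1))}

lemma bdE_eq_zero_of_last_mem (hσ : Fin.last n ∈ σ) (hτ : Fin.last n ∉ τ) : bdE σ τ = 0 :=
  bdE_eq_zero_of_not_subset fun h => hτ (h hσ)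

lemma bdE_insert_last (hσ : Fin.last n ∉ σ) (hτ : Fin.last n ∉ τ) :
    bdE σ (insert (Fin.last n) τ) = if σ = τ then (-1) ^ τ.card else 0 := by
  split_ifs with h
  · subst h
    rw [bdE_insert hτ, filter_true_of_mem fun b hb =>
      Fin.lt_last_iff_ne_last.2 fun hb' => hτ (hb' ▸ hb)]
  · by_contra hne
    obtain ⟨a, ha, hins⟩ := exists_eq_insert_of_bdE_ne_zero hne
    have ha' : a = Fin.last n := by
      by_contra ha'
      exact hσ (mem_of_mem_insert_of_ne (hins ▸ mem_insert_self _ _) (Ne.symm ha'))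
    subst ha'
    exact h (by rw [← erase_insert hσ, hins, erase_insert hτ])

lemma bdE_insert_last_insert_last (hσ : Fin.last n ∉ σ) (hτ : Fin.last n ∉ τ) :
    bdE (insert (Fin.last n) σ) (insert (Fin.last n) τ) = bdE σ τ := by
  by_cases h : ∃ a ∉ σ, insert a σ = τ
  · obtain ⟨a, ha, rfl⟩ := h
    have ha' : a ≠ Fin.last n := fun h => hτ (h ▸ mem_insert_self a σ)
    rw [insert_comm, bdE_insert (by simp [ha, ha']), bdE_insert ha, filter_insert,
      if_neg (not_lt.2 (Fin.le_last a))]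
  · rw [bdE_eq_zero_of_forall_insert_ne fun a ha e => h ⟨a, ha, e⟩,
      bdE_eq_zero_of_forall_insert_ne]
    intro a ha hins
    have ha' : a ≠ Fin.last n := fun h' => ha (h' ▸ mem_insert_self _ _)
    refine h ⟨a, fun h' => ha (mem_insert_of_mem h'), ?_⟩
    simpa [erase_insert_of_ne ha', erase_insert hσ, erase_insert hτ] using
      congrArg (·.erase (Fin.last n)) hins

lemma cF_eq_cF_union_relF (hRF : R ⊆ F) (c : ℕ) : cF F c = cF R c ∪ relF F R c := by
  ext s
  simp only [cF, relF, mem_filter, mem_union, mem_sdiff]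
  by_cases hs : s ∈ R
  · simp [hs, hRF hs]
  · simp [hs]

lemma disjoint_cF_relF (c : ℕ) : Disjoint (cF R c) (relF F R c) :=
  disjoint_left.2 fun _ h h' => (mem_sdiff.1 (mem_filter.1 h').1).2 (mem_filter.1 h).1

lemma bd_cF_eq_add (hRF : R ⊆ F) (c : ℕ) (f : Finset (Fin (n + 1)) → ℚ)
    (ρ : Finset (Fin (n + 1))) :
    bd (cF F c) f ρ = bd (cF R c) f ρ + bd (relF F R c) f ρ := by
  rw [bd, cF_eq_cF_union_relF hRF, sum_union (disjoint_cF_relF c), bd, bd]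

lemma bd_cF_eq_bd_relF (hR : IsLowerSet (R : Set (Finset (Fin (n + 1))))) (hRF : R ⊆ F)
    (hρ : ρ ∉ R) (c : ℕ) (f : Finset (Fin (n + 1)) → ℚ) :
    bd (cF F c) f ρ = bd (relF F R c) f ρ := by
  rw [bd_cF_eq_add hRF, add_eq_right]
  refine sum_eq_zero fun τ hτ => ?_
  rw [bdE_eq_zero_of_not_subset fun h => hρ (hR h (mem_filter.1 hτ).1), Int.cast_zero, zero_mul]

lemma bd_eq_zero_of_last_mem {S : Finset (Finset (Fin (n + 1)))} (hS : ∀ s ∈ S, Fin.last n ∉ s)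
    (hρ : Fin.last n ∈ ρ) (f : Finset (Fin (n + 1)) → ℚ) : bd S f ρ = 0 :=
  sum_eq_zero fun τ hτ => by rw [bdE_eq_zero_of_last_mem hρ (hS τ hτ), Int.cast_zero, zero_mul]

lemma cF_union_coneC (hRF : R ⊆ F) (hνF : ∀ s ∈ F, Fin.last n ∉ s) (c : ℕ) :
    cF (F ∪ coneC R) (c + 1) = cF F (c + 1) ∪ (cF R c).image (insert (Fin.last n)) := by
  ext s
  simp only [cF, coneC, mem_filter, mem_union, mem_image]
  constructor
  · rintro ⟨(hs | hs | ⟨σ, hσ, rfl⟩), hc⟩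
    · exact .inl ⟨hs, hc⟩
    · exact .inl ⟨hRF hs, hc⟩
    · rw [card_insert_of_notMem (hνF σ (hRF hσ))] at hc
      exact .inr ⟨σ, ⟨hσ, by omega⟩, rfl⟩
  · rintro (⟨hs, hc⟩ | ⟨σ, ⟨hσ, hc⟩, rfl⟩)
    · exact ⟨.inl hs, hc⟩
    · exact ⟨.inr (.inr ⟨σ, hσ, rfl⟩), by rw [card_insert_of_notMem (hνF σ (hRF hσ)), hc]⟩

lemma injOn_insert_last (hνR : ∀ s ∈ R, Fin.last n ∉ s) :
    Set.InjOn (insert (Fin.last n)) (R : Set (Finset (Fin (n + 1)))) :=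
  fun σ hσ τ hτ h => by rw [← erase_insert (hνR σ hσ), h, erase_insert (hνR τ hτ)]

lemma disjoint_cF_image_insert_last (hνF : ∀ s ∈ F, Fin.last n ∉ s) (c c' : ℕ) :
    Disjoint (cF F c) ((cF R c').image (insert (Fin.last n))) :=
  disjoint_left.2 fun _ h h' => by
    obtain ⟨σ, -, rfl⟩ := mem_image.1 h'
    exact hνF _ (cF_subset h) (mem_insert_self _ _)

lemma bd_cF_union_coneC (hRF : R ⊆ F) (hνF : ∀ s ∈ F, Fin.last n ∉ s) (c : ℕ)
    (f : Finset (Fin (n + 1)) → ℚ)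
    (ρ : Finset (Fin (n + 1))) :
    bd (cF (F ∪ coneC R) (c + 1)) f ρ =
      bd (cF F (c + 1)) f ρ + ∑ σ ∈ cF R c, (bdE ρ (insert (Fin.last n) σ) : ℚ) *
        f (insert (Fin.last n) σ) := by
  rw [bd, cF_union_coneC hRF hνF, sum_union (disjoint_cF_image_insert_last hνF _ _), sum_image
    ((injOn_insert_last fun s hs => hνF s (hRF hs)).mono (coe_subset.2 cF_subset)), bd]

lemma mem_relF_union_coneC_of_mem_cF {c : ℕ} (hτ : τ ∈ cF F c) :
    τ ∈ relF (F ∪ coneC R) ∅ c := by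
  rw [relF_empty]
  exact mem_filter.2 ⟨mem_union_left _ (cF_subset hτ), (mem_filter.1 hτ).2⟩

lemma card_cF_union_coneC (hRF : R ⊆ F) (hνF : ∀ s ∈ F, Fin.last n ∉ s) (c : ℕ) :
    (cF (F ∪ coneC R) (c + 1)).card = (cF R (c + 1)).card + (relF F R (c + 1)).card +
      (cF R c).card := by
  rw [cF_union_coneC hRF hνF, card_union_of_disjoint (disjoint_cF_image_insert_last hνF _ _),
    card_image_of_injOn ((injOn_insert_last fun s hs => hνF s (hRF hs)).mono
      (coe_subset.2 cF_subset)), cF_eq_cF_union_relF hRF, card_union_of_disjoint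
      (disjoint_cF_relF _)]

lemma sum_cF_bdE_insert_last (hνR : ∀ s ∈ R, Fin.last n ∉ s) (hρ : Fin.last n ∉ ρ) (c : ℕ)
    (f : Finset (Fin (n + 1)) → ℚ) :
    ∑ σ ∈ cF R c, (bdE ρ (insert (Fin.last n) σ) : ℚ) * f (insert (Fin.last n) σ) =
      if ρ ∈ cF R c then (-1) ^ c * f (insert (Fin.last n) ρ) else 0 := by
  rw [sum_congr rfl fun σ hσ => by
    rw [bdE_insert_last hρ (hνR σ (mem_filter.1 hσ).1), (mem_filter.1 hσ).2]]
  simp only [Int.cast_ite, ite_mul, Int.cast_zero, zero_mul, sum_ite_eq]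
  push_cast
  rfl

end Cone

section Cycles

variable {n : ℕ} {F R : Finset (Finset (Fin (n + 1)))}

lemma bd_cF_bd_cF_eq_zero_of_relF (hF : IsLowerSet (F : Set (Finset (Fin (n + 1)))))
    (hR : IsLowerSet (R : Set (Finset (Fin (n + 1))))) (hRF : R ⊆ F) {c : ℕ}
    {f : Finset (Fin (n + 1)) → ℚ} (hf : ∀ ρ ∈ relF F R c, bd (relF F R (c + 1)) f ρ = 0)
    (σ : Finset (Fin (n + 1))) : bd (cF R c) (bd (cF F (c + 1)) f) σ = 0 := by
  have h := congrFun (bd_cF_bd_cF hF c f) σ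
  have hrel : bd (relF F R c) (bd (cF F (c + 1)) f) σ = 0 := sum_eq_zero fun τ hτ => by
    rw [bd_cF_eq_bd_relF hR hRF (mem_sdiff.1 (mem_filter.1 hτ).1).2, hf τ hτ, mul_zero]
  rwa [Pi.zero_apply, bd_cF_eq_add hRF, hrel, add_zero] at h

/-- The row of a cone face is, up to sign, a row of `∂ ∘ ∂` applied to `f` on `F`. -/
lemma bd_union_coneC_insert_last_eq_zero (hF : IsLowerSet (F : Set (Finset (Fin (n + 1)))))
    (hR : IsLowerSet (R : Set (Finset (Fin (n + 1))))) (hRF : R ⊆ F)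
    (hνF : ∀ s ∈ F, Fin.last n ∉ s) {c : ℕ} {f : Finset (Fin (n + 1)) → ℚ}
    (hA : ∀ ρ ∈ cF R c, f (insert (Fin.last n) ρ) = -(-1) ^ c * bd (cF F (c + 1)) f ρ)
    (hB : ∀ ρ ∈ relF F R c, bd (relF F R (c + 1)) f ρ = 0) {σ : Finset (Fin (n + 1))}
    (hσ : σ ∈ R) : bd (cF (F ∪ coneC R) (c + 1)) f (insert (Fin.last n) σ) = 0 := by
  rw [bd_cF_union_coneC hRF hνF, bd_eq_zero_of_last_mem (fun s hs => hνF s (cF_subset hs))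
    (mem_insert_self _ _), zero_add, ← mul_zero (-(-1) ^ c : ℚ),
    ← bd_cF_bd_cF_eq_zero_of_relF hF hR hRF hB σ, bd, mul_sum]
  refine sum_congr rfl fun τ hτ => ?_
  rw [bdE_insert_last_insert_last (hνF σ (hRF hσ)) (hνF τ (hRF (cF_subset hτ))), hA τ hτ]
  ring

theorem forall_bd_union_coneC_eq_zero_iff (hF : IsLowerSet (F : Set (Finset (Fin (n + 1)))))
    (hR : IsLowerSet (R : Set (Finset (Fin (n + 1))))) (hRF : R ⊆ F)
    (hνF : ∀ s ∈ F, Fin.last n ∉ s) (c : ℕ) (f : Finset (Fin (n + 1)) → ℚ) :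
    (∀ ρ ∈ cF (F ∪ coneC R) c, bd (cF (F ∪ coneC R) (c + 1)) f ρ = 0) ↔
      (∀ ρ ∈ cF R c, f (insert (Fin.last n) ρ) = -(-1) ^ c * bd (cF F (c + 1)) f ρ) ∧
      ∀ ρ ∈ relF F R c, bd (relF F R (c + 1)) f ρ = 0 := by
  have hνR : ∀ s ∈ R, Fin.last n ∉ s := fun s hs => hνF s (hRF hs)
  have hε : ((-1 : ℚ) ^ c) * (-1) ^ c = 1 := by rw [← mul_pow]; norm_num
  have hrow : ∀ ρ ∈ F, bd (cF (F ∪ coneC R) (c + 1)) f ρ = bd (cF F (c + 1)) f ρ +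
      if ρ ∈ cF R c then (-1) ^ c * f (insert (Fin.last n) ρ) else 0 := fun ρ hρ => by
    rw [bd_cF_union_coneC hRF hνF, sum_cF_bdE_insert_last hνR (hνF ρ hρ)]
  constructor
  · intro h
    refine ⟨fun ρ hρ => ?_, fun ρ hρ => ?_⟩
    · have hρF := hRF (cF_subset hρ)
      have := h ρ (mem_filter.2 ⟨mem_union_left _ hρF, (mem_filter.1 hρ).2⟩)
      rw [hrow ρ hρF, if_pos hρ] at this
      linear_combination (-1) ^ c * this - f (insert (Fin.last n) ρ) * hε
    · obtain ⟨hρ', hρc⟩ := mem_filter.1 hρ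
      obtain ⟨hρF, hρR⟩ := mem_sdiff.1 hρ'
      have := h ρ (mem_filter.2 ⟨mem_union_left _ hρF, hρc⟩)
      rwa [hrow ρ hρF, if_neg fun h => hρR (cF_subset h), add_zero,
        bd_cF_eq_bd_relF hR hRF hρR] at this
  · rintro ⟨hA, hB⟩ ρ hρ
    obtain ⟨hρX, hρc⟩ := mem_filter.1 hρ
    obtain hρF | ⟨σ, hσ, rfl⟩ : ρ ∈ F ∨ ∃ σ ∈ R, insert (Fin.last n) σ = ρ := by
      simp only [coneC, mem_union, mem_image] at hρX
      rcases hρX with h | h | h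
      exacts [.inl h, .inl (hRF h), .inr h]
    · by_cases hρR : ρ ∈ R
      · have hρR' : ρ ∈ cF R c := mem_filter.2 ⟨hρR, hρc⟩
        rw [hrow ρ hρF, if_pos hρR', hA ρ hρR']
        linear_combination -bd (cF F (c + 1)) f ρ * hε
      · rw [hrow ρ hρF, if_neg fun h => hρR (cF_subset h), add_zero,
          bd_cF_eq_bd_relF hR hRF hρR]
        exact hB ρ (mem_filter.2 ⟨mem_sdiff.2 ⟨hρF, hρR⟩, hρc⟩)
    · exact bd_union_coneC_insert_last_eq_zero hF hR hRF hνF hA hB hσ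

end Cycles

section Kernel

variable {n : ℕ} {F R : Finset (Finset (Fin (n + 1)))}

lemma eq_zero_of_mem_ker_of_forall_cF_eq_zero (hF : IsLowerSet (F : Set (Finset (Fin (n + 1)))))
    (hR : IsLowerSet (R : Set (Finset (Fin (n + 1))))) (hRF : R ⊆ F)
    (hνF : ∀ s ∈ F, Fin.last n ∉ s) {c : ℕ} {x : relF (F ∪ coneC R) ∅ (c + 1) → ℚ}
    (hx : x ∈ LinearMap.ker (qMat (F ∪ coneC R) ∅ (c + 1)).mulVecLin)
    (h : ∀ τ ∈ cF F (c + 1), extendZero _ x τ = 0) : x = 0 := by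
  have hA := ((forall_bd_union_coneC_eq_zero_iff hF hR hRF hνF c _).1
    (mem_ker_qMat_empty_iff.1 hx)).1
  funext ⟨τ, hτ⟩
  rw [Pi.zero_apply, ← extendZero_coe x ⟨τ, hτ⟩]
  have hτ' : τ ∈ cF F (c + 1) ∪ (cF R c).image (insert (Fin.last n)) := by
    rwa [← cF_union_coneC hRF hνF, ← relF_empty]
  obtain hτ | ⟨ρ, hρ, rfl⟩ := mem_union.1 hτ' |>.imp_right mem_image.1
  · exact h τ hτ
  · rw [hA ρ hρ, bd_congr h, bd, sum_eq_zero fun _ _ => mul_zero _, mul_zero]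

lemma exists_mem_ker_forall_cF_eq (hF : IsLowerSet (F : Set (Finset (Fin (n + 1)))))
    (hR : IsLowerSet (R : Set (Finset (Fin (n + 1))))) (hRF : R ⊆ F)
    (hνF : ∀ s ∈ F, Fin.last n ∉ s) {c : ℕ} {g : Finset (Fin (n + 1)) → ℚ}
    (hg : ∀ ρ ∈ relF F R c, bd (relF F R (c + 1)) g ρ = 0) :
    ∃ x ∈ LinearMap.ker (qMat (F ∪ coneC R) ∅ (c + 1)).mulVecLin,
      ∀ τ ∈ cF F (c + 1), extendZero _ x τ = g τ := by
  set f : Finset (Fin (n + 1)) → ℚ := fun τ => if Fin.last n ∈ τ then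
    -(-1) ^ c * bd (cF F (c + 1)) g (τ.erase (Fin.last n)) else g τ
  have hfg : ∀ τ ∈ F, f τ = g τ := fun τ hτ => if_neg (hνF τ hτ)
  have hrel : ∀ τ ∈ relF F R (c + 1), τ ∈ F := fun τ hτ => (mem_sdiff.1 (mem_filter.1 hτ).1).1
  refine ⟨fun τ => f τ, ?_, fun τ hτ => ?_⟩
  · rw [mem_ker_qMat_empty_iff, bd_congr fun τ hτ => extendZero_coe (fun τ => f τ) ⟨τ, by
      rwa [relF_empty]⟩, forall_bd_union_coneC_eq_zero_iff hF hR hRF hνF]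
    refine ⟨fun ρ hρ => ?_, fun ρ hρ => ?_⟩
    · have hρ' : Fin.last n ∉ ρ := hνF ρ (hRF (cF_subset hρ))
      rw [bd_congr fun τ hτ => hfg τ (cF_subset hτ)]
      exact if_pos (mem_insert_self _ _) |>.trans (by rw [erase_insert hρ'])
    · rw [bd_congr fun τ hτ => hfg τ (hrel τ hτ)]
      exact hg ρ hρ
  · exact (extendZero_coe (fun τ => f τ) ⟨τ, mem_relF_union_coneC_of_mem_cF (R := R) hτ⟩).trans
      (hfg τ (cF_subset hτ))

end Kernel

section Rank

variable {n : ℕ} {F R : Finset (Finset (Fin (n + 1)))}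

theorem finrank_ker_qMat_union_coneC (hF : IsLowerSet (F : Set (Finset (Fin (n + 1)))))
    (hR : IsLowerSet (R : Set (Finset (Fin (n + 1))))) (hRF : R ⊆ F)
    (hνF : ∀ s ∈ F, Fin.last n ∉ s) (c : ℕ) :
    Module.finrank ℚ (LinearMap.ker (qMat (F ∪ coneC R) ∅ (c + 1)).mulVecLin) =
      (cF R (c + 1)).card + Module.finrank ℚ (LinearMap.ker (qMat F R (c + 1)).mulVecLin) := by
  set KX := LinearMap.ker (qMat (F ∪ coneC R) ∅ (c + 1)).mulVecLin
  set KFR := LinearMap.ker (qMat F R (c + 1)).mulVecLin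
  have hU τ (hτ : τ ∈ cF R (c + 1)) := mem_relF_union_coneC_of_mem_cF (R := R)
    (cF_eq_cF_union_relF hRF _ ▸ mem_union_left _ hτ)
  have hV τ (hτ : τ ∈ relF F R (c + 1)) := mem_relF_union_coneC_of_mem_cF (R := R)
    (cF_eq_cF_union_relF hRF _ ▸ mem_union_right _ hτ)
  let resU := LinearMap.funLeft ℚ ℚ
    fun τ : cF R (c + 1) => (⟨τ, hU τ τ.2⟩ : relF (F ∪ coneC R) ∅ (c + 1))
  let resV := LinearMap.funLeft ℚ ℚ
    fun τ : relF F R (c + 1) => (⟨τ, hV τ τ.2⟩ : relF (F ∪ coneC R) ∅ (c + 1))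
  have hresV : ∀ x ∈ KX, resV x ∈ KFR := fun x hx => by
    have h := ((forall_bd_union_coneC_eq_zero_iff hF hR hRF hνF c _).1
      (mem_ker_qMat_empty_iff.1 hx)).2
    refine mem_ker_qMat_iff.2 fun ρ hρ => ?_
    rw [← h ρ hρ]
    exact congrFun (bd_congr fun τ hτ => by
      rw [extendZero_of_mem _ hτ, extendZero_of_mem _ (hV τ hτ)]; rfl) ρ
  let φ : KX →ₗ[ℚ] (cF R (c + 1) → ℚ) × KFR :=
    (resU ∘ₗ KX.subtype).prod ((resV ∘ₗ KX.subtype).codRestrict _ fun x => hresV x x.2)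
  have hinj : Function.Injective φ := by
    rw [← LinearMap.ker_eq_bot, LinearMap.ker_eq_bot']
    rintro ⟨x, hx⟩ h0
    obtain ⟨h0U, h0V⟩ := Prod.ext_iff.1 h0
    refine Subtype.ext (eq_zero_of_mem_ker_of_forall_cF_eq_zero hF hR hRF hνF hx fun τ hτ => ?_)
    rw [cF_eq_cF_union_relF hRF, mem_union] at hτ
    rcases hτ with hτ | hτ
    · rw [extendZero_of_mem _ (hU τ hτ)]
      exact congrFun h0U ⟨τ, hτ⟩
    · rw [extendZero_of_mem _ (hV τ hτ)]
      exact congrFun (congrArg Subtype.val h0V) ⟨τ, hτ⟩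
  have hsurj : Function.Surjective φ := by
    rintro ⟨u, v, hv⟩
    have hdisj := disjoint_left.1 (disjoint_cF_relF (F := F) (R := R) (c + 1))
    obtain ⟨x, hx, hxg⟩ := exists_mem_ker_forall_cF_eq hF hR hRF hνF
      (g := extendZero _ u + extendZero _ v) fun ρ hρ => by
        rw [bd_congr fun τ hτ => by
          rw [Pi.add_apply, extendZero_of_notMem u fun h => hdisj h hτ, zero_add]]
        exact mem_ker_qMat_iff.1 hv ρ hρ
    rw [cF_eq_cF_union_relF hRF] at hxg
    refine ⟨⟨x, hx⟩, Prod.ext (funext fun τ => ?_) (Subtype.ext (funext fun τ => ?_))⟩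
    · have := hxg τ (mem_union_left _ τ.2)
      rwa [extendZero_of_mem _ (hU τ τ.2), Pi.add_apply, extendZero_coe,
        extendZero_of_notMem v fun h => hdisj τ.2 h, add_zero] at this
    · have := hxg τ (mem_union_right _ τ.2)
      rwa [extendZero_of_mem _ (hV τ τ.2), Pi.add_apply, extendZero_coe,
        extendZero_of_notMem u fun h => hdisj h τ.2, zero_add] at this
  rw [(LinearEquiv.ofBijective φ ⟨hinj, hsurj⟩).finrank_eq, Module.finrank_prod,
    Module.finrank_fintype_fun_eq_card, Fintype.card_coe]

theorem rank_qMat_union_coneC (hF : IsLowerSet (F : Set (Finset (Fin (n + 1)))))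
    (hR : IsLowerSet (R : Set (Finset (Fin (n + 1))))) (hRF : R ⊆ F)
    (hνF : ∀ s ∈ F, Fin.last n ∉ s) (c : ℕ) :
    (qMat (F ∪ coneC R) ∅ (c + 1)).rank = (qMat F R (c + 1)).rank + (cF R c).card := by
  have hX := rank_add_finrank_ker_qMat (F ∪ coneC R) ∅ (c + 1)
  have hFR := rank_add_finrank_ker_qMat F R (c + 1)
  have hcard : (relF (F ∪ coneC R) ∅ (c + 1)).card = (cF (F ∪ coneC R) (c + 1)).card := by
    rw [relF_empty]
  rw [finrank_ker_qMat_union_coneC hF hR hRF hνF, hcard, card_cF_union_coneC hRF hνF] at hX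
  omega

theorem rank_qMat_coneC {Δ : Finset (Finset (Fin (n + 1)))}
    (hΔ : IsLowerSet (Δ : Set (Finset (Fin (n + 1))))) (hΔn : ∀ s ∈ Δ, Fin.last n ∉ s) (c : ℕ) :
    (qMat (coneC Δ) ∅ (c + 1)).rank = (cF Δ c).card := by
  have h := rank_qMat_union_coneC hΔ hΔ subset_rfl hΔn c
  have h0 := rank_qMat_le_card_relF Δ Δ (c + 1)
  rw [show Δ ∪ coneC Δ = coneC Δ by rw [coneC, ← union_assoc, union_self]] at h
  have hcard : (relF Δ Δ (c + 1)).card = 0 := by simp [relF]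
  omega

end Rank

section Complexes

variable {m n k : ℕ}

lemma IsComplex.isLowerSet {X : Finset (Finset (Fin m))} (hX : IsComplex X) :
    IsLowerSet (X : Set (Finset (Fin m))) :=
  fun _ _ hts hs => hX.2 _ hs _ hts

lemma KCplx.card_le_s9 {Δ X : Finset (Finset (Fin m))} (hX : KCplx Δ k X) {s : Finset (Fin m)}
    (hs : s ∈ X) : s.card ≤ k + 1 :=
  (mem_filter.1 (hX.2.2 hs)).2

lemma KCplx.mem_of_mem {Δ X : Finset (Finset (Fin m))} (hX : KCplx Δ k X) {s : Finset (Fin m)}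
    (hs : s ∈ X) : s ∈ Δ :=
  (mem_filter.1 (hX.2.2 hs)).1

lemma KCplx.mem {Δ X : Finset (Finset (Fin m))} (hX : KCplx Δ k X) {s : Finset (Fin m)}
    (hs : s ∈ Δ) (hc : s.card ≤ k) : s ∈ X :=
  hX.2.1 (mem_filter.2 ⟨hs, hc⟩)

lemma KCplx.subset_of_kCplx_sub_one {Δ F R : Finset (Finset (Fin m))} (hk : 1 ≤ k)
    (hF : KCplx Δ k F) (hR : KCplx Δ (k - 1) R) : R ⊆ F :=
  fun _ hs => hF.mem (hR.mem_of_mem hs) (by have := hR.card_le_s9 hs; omega)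

lemma isLowerSet_coneC {R : Finset (Finset (Fin (n + 1)))}
    (hR : IsLowerSet (R : Set (Finset (Fin (n + 1))))) :
    IsLowerSet (coneC R : Set (Finset (Fin (n + 1)))) := by
  intro s t hts hs
  simp only [coneC, coe_union, coe_image, Set.mem_union, Set.mem_image, mem_coe] at hs ⊢
  obtain hs | ⟨σ, hσ, rfl⟩ := hs
  · exact .inl (hR hts hs)
  · have hσ' : t.erase (Fin.last n) ∈ R := hR (subset_insert_iff.1 hts) hσ
    by_cases ht : Fin.last n ∈ t
    · exact .inr ⟨_, hσ', insert_erase ht⟩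
    · exact .inl (erase_eq_of_notMem ht ▸ hσ')

variable {Δ F R X : Finset (Finset (Fin (n + 1)))}

lemma kCplx_union_coneC (hΔn : ∀ s ∈ Δ, Fin.last n ∉ s) (hk : 1 ≤ k) (hF : KCplx Δ k F)
    (hR : KCplx Δ (k - 1) R) : KCplx (coneC Δ) k (F ∪ coneC R) := by
  refine ⟨⟨mem_union_left _ hF.1.1, fun s hs t hts => ?_⟩, fun s hs => ?_, fun s hs => ?_⟩
  · have h := hF.1.isLowerSet.union (isLowerSet_coneC hR.1.isLowerSet)
    rw [← coe_union] at h
    exact h hts hs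
  · obtain ⟨hs, hc⟩ := mem_filter.1 hs
    simp only [coneC, mem_union, mem_image] at hs ⊢
    obtain hs | ⟨σ, hσ, rfl⟩ := hs
    · exact .inl (hF.mem hs hc)
    · rw [card_insert_of_notMem (hΔn σ hσ)] at hc
      exact .inr (.inr ⟨σ, hR.mem hσ (by omega), rfl⟩)
  · simp only [coneC, mem_filter, mem_union, mem_image] at hs ⊢
    obtain hs | hs | ⟨σ, hσ, rfl⟩ := hs
    · exact ⟨.inl (hF.mem_of_mem hs), hF.card_le_s9 hs⟩
    · exact ⟨.inl (hR.mem_of_mem hs), by have := hR.card_le_s9 hs; omega⟩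
    · refine ⟨.inr ⟨σ, hR.mem_of_mem hσ, rfl⟩, ?_⟩
      rw [card_insert_of_notMem (hΔn σ (hR.mem_of_mem hσ))]
      have := hR.card_le_s9 hσ
      omega

lemma KCplx.inter (hΔ : IsComplex Δ) (hX : KCplx (coneC Δ) k X) : KCplx Δ k (X ∩ Δ) := by
  refine ⟨⟨mem_inter.2 ⟨hX.1.1, hΔ.1⟩, fun s hs t hts => ?_⟩, fun s hs => ?_, fun s hs => ?_⟩
  · exact mem_inter.2 ⟨hX.1.2 s (mem_inter.1 hs).1 t hts, hΔ.2 s (mem_inter.1 hs).2 t hts⟩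
  · obtain ⟨hs, hc⟩ := mem_filter.1 hs
    exact mem_inter.2 ⟨hX.mem (mem_union_left _ hs) hc, hs⟩
  · exact mem_filter.2 ⟨(mem_inter.1 hs).2, hX.card_le_s9 (mem_inter.1 hs).1⟩

lemma KCplx.linkC (hΔ : IsComplex Δ) (hΔn : ∀ s ∈ Δ, Fin.last n ∉ s) (hk : 1 ≤ k)
    (hX : KCplx (coneC Δ) k X) : KCplx Δ (k - 1) (linkC Δ X) := by
  have hcone : ∀ s ∈ Δ, s.card + 1 ≤ k → insert (Fin.last n) s ∈ X := fun s hs hc =>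
    hX.mem (mem_union_right _ (mem_image_of_mem _ hs))
      (by rw [card_insert_of_notMem (hΔn s hs)]; exact hc)
  refine ⟨⟨mem_filter.2 ⟨hΔ.1, hcone ∅ hΔ.1 hk⟩, fun s hs t hts => ?_⟩, fun s hs => ?_,
    fun s hs => ?_⟩
  · obtain ⟨hs, hsX⟩ := mem_filter.1 hs
    exact mem_filter.2 ⟨hΔ.2 s hs t hts, hX.1.2 _ hsX _ (insert_subset_insert _ hts)⟩
  · obtain ⟨hs, hc⟩ := mem_filter.1 hs
    exact mem_filter.2 ⟨hs, hcone s hs (by omega)⟩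
  · obtain ⟨hs, hsX⟩ := mem_filter.1 hs
    have := hX.card_le_s9 hsX
    rw [card_insert_of_notMem (hΔn s hs)] at this
    exact mem_filter.2 ⟨hs, by omega⟩

lemma inter_union_coneC_linkC (hX : IsComplex X) (hXΔ : X ⊆ coneC Δ) :
    X ∩ Δ ∪ coneC (linkC Δ X) = X := by
  refine Subset.antisymm (union_subset inter_subset_left (union_subset ?_ ?_)) fun s hs => ?_
  · exact fun σ hσ => hX.2 _ (mem_filter.1 hσ).2 _ (subset_insert _ _)
  · exact image_subset_iff.2 fun σ hσ => (mem_filter.1 hσ).2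
  · rcases mem_union.1 (hXΔ hs) with hsΔ | hsΔ
    · exact mem_union_left _ (mem_inter.2 ⟨hs, hsΔ⟩)
    · obtain ⟨σ, hσ, rfl⟩ := mem_image.1 hsΔ
      exact mem_union_right _ (mem_union_right _ (mem_image_of_mem _ (mem_filter.2 ⟨hσ, hs⟩)))

lemma union_coneC_inter (hΔn : ∀ s ∈ Δ, Fin.last n ∉ s) (hFΔ : F ⊆ Δ) (hRF : R ⊆ F) :
    (F ∪ coneC R) ∩ Δ = F := by
  refine Subset.antisymm (fun s hs => ?_) fun s hs => mem_inter.2 ⟨mem_union_left _ hs, hFΔ hs⟩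
  obtain ⟨hs, hsΔ⟩ := mem_inter.1 hs
  simp only [coneC, mem_union, mem_image] at hs
  obtain hs | hs | ⟨σ, -, rfl⟩ := hs
  · exact hs
  · exact hRF hs
  · exact absurd (mem_insert_self _ _) (hΔn _ hsΔ)

lemma linkC_union_coneC (hΔn : ∀ s ∈ Δ, Fin.last n ∉ s) (hFΔ : F ⊆ Δ) (hRF : R ⊆ F) :
    linkC Δ (F ∪ coneC R) = R := by
  have hνR : ∀ s ∈ R, Fin.last n ∉ s := fun s hs => hΔn s (hFΔ (hRF hs))
  ext s
  simp only [linkC, coneC, mem_filter, mem_union, mem_image]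
  constructor
  · rintro ⟨hs, h | h | ⟨σ, hσ, e⟩⟩
    · exact absurd (mem_insert_self _ _) (hΔn _ (hFΔ h))
    · exact absurd (mem_insert_self _ _) (hνR _ h)
    · rwa [← erase_insert (hΔn s hs), ← e, erase_insert (hνR σ hσ)]
  · exact fun hs => ⟨hFΔ (hRF hs), .inr (.inr ⟨s, hs, rfl⟩)⟩

end Complexes

section Trees

variable {n k : ℕ} {Δ F R : Finset (Finset (Fin (n + 1)))}

theorem isTree_union_coneC_iff (hΔ : IsComplex Δ) (hΔn : ∀ s ∈ Δ, Fin.last n ∉ s) (hk : 1 ≤ k)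
    (hF : KCplx Δ k F) (hR : KCplx Δ (k - 1) R) :
    IsTree (coneC Δ) k (F ∪ coneC R) ↔ bettiL F R k = 0 ∧ bettiL F R (k + 1) = 0 := by
  have hX := kCplx_union_coneC hΔn hk hF hR
  have hRF := hF.subset_of_kCplx_sub_one hk hR
  have hνF : ∀ s ∈ F, Fin.last n ∉ s := fun s hs => hΔn s (hF.mem_of_mem hs)
  have hcF {c : ℕ} {X : Finset (Finset (Fin (n + 1)))} (h : ∀ s ∈ X, s.card ≠ c) :
      (cF X c).card = 0 :=
    card_eq_zero.2 (filter_false_of_mem h)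
  have hR1 := hcF (c := k + 1) fun s hs => by have := hR.card_le_s9 hs; omega
  have hF2 := hcF (c := k + 1 + 1) fun s hs => by have := hF.card_le_s9 hs; omega
  have hX2 := hcF (c := k + 1 + 1) fun s hs => by have := hX.card_le_s9 hs; omega
  have hFR0 : (relF F R (k - 1)).card = 0 := card_eq_zero.2 <| filter_false_of_mem fun s hs hc =>
    (mem_sdiff.1 hs).2 (hR.mem (hF.mem_of_mem (mem_sdiff.1 hs).1) hc.le)
  have hFR2 : (relF F R (k + 1 + 1)).card ≤ (cF F (k + 1 + 1)).card :=
    card_le_card (filter_subset_filter _ sdiff_subset)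
  have hFΔ : cF F k = cF Δ k := by
    ext s
    simp only [cF, mem_filter]
    exact ⟨fun h => ⟨hF.mem_of_mem h.1, h.2⟩, fun h => ⟨hF.mem h.1 h.2.le, h.2⟩⟩
  have hFRk := congrArg card (cF_eq_cF_union_relF hRF k)
  have hFRk1 := congrArg card (cF_eq_cF_union_relF hRF (k + 1))
  rw [card_union_of_disjoint (disjoint_cF_relF _)] at hFRk hFRk1
  rw [hFΔ] at hFRk
  have hXk1 : (relF (F ∪ coneC R) ∅ (k + 1)).card = (cF (F ∪ coneC R) (k + 1)).card := by
    rw [relF_empty]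
  have hXk2 : (relF (F ∪ coneC R) ∅ (k + 1 + 1)).card = (cF (F ∪ coneC R) (k + 1 + 1)).card := by
    rw [relF_empty]
  have hheight := rank_qMat_le_card_relF_sub_one F R (k + 1)
  simp only [Nat.add_sub_cancel] at hheight
  have hwidth := rank_qMat_le_card_relF F R (k + 1)
  have hFRk2' := rank_qMat_le_card_relF F R (k + 1 + 1)
  have hXk2' := rank_qMat_le_card_relF (F ∪ coneC R) ∅ (k + 1 + 1)
  have hFR0' := rank_qMat_le_card_relF_sub_one F R k
  have hcardX := card_cF_union_coneC hRF hνF k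
  have hrankX := rank_qMat_union_coneC hF.1.isLowerSet hR.1.isLowerSet hRF hνF k
  have hrankΔ := rank_qMat_coneC hΔ.isLowerSet hΔn k
  simp only [IsTree, bettiL, hX, true_and]
  omega

end Trees

/-- The binomial correspondence `X ↦ (X ∩ Δ, Link(n,X))` restricts to a bijection between
the `k`-dimensional spanning trees of `Cone(n,Δ)` and the rooted `(n-1,k)`-forests of `Δ`
(pairs `(F,R)` of an `(n-1,k)`-complex and an `(n-1,k-1)`-complex of `Δ` with
`β_{k-1}(F,R) = β_k(F,R) = 0`); moreover `F ∪ Cone(n,R)` is a `k`-tree of `Cone(n,Δ)` iff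
`(F,R)` is a rooted forest. -/
theorem stmt9 (n k : ℕ) (hk : 1 ≤ k) (Δ : Finset (Finset (Fin (n + 1))))
    (hΔ : IsComplex Δ) (hΔn : ∀ s ∈ Δ, Fin.last n ∉ s) :
    Set.BijOn (fun X => (X ∩ Δ, linkC Δ X))
      {X | IsTree (coneC Δ) k X}
      {P : Finset (Finset (Fin (n + 1))) × Finset (Finset (Fin (n + 1))) |
        KCplx Δ k P.1 ∧ KCplx Δ (k - 1) P.2 ∧
          bettiL P.1 P.2 k = 0 ∧ bettiL P.1 P.2 (k + 1) = 0} ∧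
    (∀ F R, KCplx Δ k F → KCplx Δ (k - 1) R →
      (IsTree (coneC Δ) k (F ∪ coneC R) ↔ bettiL F R k = 0 ∧ bettiL F R (k + 1) = 0)) := by
  have hiff F R (hF : KCplx Δ k F) (hR : KCplx Δ (k - 1) R) :=
    isTree_union_coneC_iff hΔ hΔn hk hF hR
  have hdecomp X (hX : IsTree (coneC Δ) k X) : X ∩ Δ ∪ coneC (linkC Δ X) = X :=
    inter_union_coneC_linkC hX.1.1 fun _ hs => hX.1.mem_of_mem hs
  refine ⟨⟨fun X hX => ?_, fun X hX Y hY h => ?_, fun P hP => ?_⟩, hiff⟩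
  · have hF := hX.1.inter hΔ
    have hR := hX.1.linkC hΔ hΔn hk
    exact ⟨hF, hR, (hiff _ _ hF hR).1 (by rwa [hdecomp X hX])⟩
  · obtain ⟨hproj, hlink⟩ := Prod.mk.inj h
    rw [← hdecomp X hX, ← hdecomp Y hY, hproj, hlink]
  · obtain ⟨hF, hR, hβ⟩ := hP
    have hFΔ : P.1 ⊆ Δ := fun _ hs => hF.mem_of_mem hs
    have hRF := hF.subset_of_kCplx_sub_one hk hR
    exact ⟨P.1 ∪ coneC P.2, (hiff _ _ hF hR).2 hβ,
      Prod.ext (union_coneC_inter hΔn hFΔ hRF) (linkC_union_coneC hΔn hFΔ hRF)⟩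
end

section
/- Let R, S be finite sets and M an R×S real matrix of rank |R|. Define the determinantal measure μ on |R|-element subsets T of S by μ(T) = det(M_{•,T})² / det(M M^t), where M_{•,T} is the square submatrix with columns T. Then μ is a probability measure; moreover, letting P = M^t (M M^t)^{-1} M, for any B ⊆ S we have μ({T : B ⊆ T}) = det P_{B,B} and μ({T : T ∩ B = ∅}) = det(Id − P)_{B,B}. -/
/-!
Write `P = U V` with `U = Mᵀ (M Mᵀ)⁻¹` and `V = M`, so that `V U = 1`; for `#T = #R` the
principal minor `det P_{T,T}` is `μ T`. Let `D` be the diagonal indicator of `Bᶜ`. The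
coefficient of `X ^ k` in `det (1 + X D P)` is the sum of the `k × k` principal minors of `P` on
sets avoiding `B`. By the Weinstein–Aronszajn identity this determinant equals
`det (1 + X V D U) = det ((1 + X) - X V (1 - D) U)`, whose coefficient of `X ^ #R` is
`det (1 - (1 - D) P) = det (1 - P)_{B,B}`. Total mass one is the case `B = ∅`, and the formula
for `μ {T : B ⊆ T}` follows by inclusion–exclusion from
`det A_{B,B} = ∑_{E ⊆ B} (-1)^#E det (1 - A)_{E,E}`.
-/

open Finset Matrix Polynomial

theorem Finset.sum_filter_subset_eq_sum_powerset {ι R : Type*} [DecidableEq ι] [CommRing R]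
    (𝒯 : Finset (Finset ι)) (w : Finset ι → R) (B : Finset ι) :
    ∑ T ∈ 𝒯.filter (B ⊆ ·), w T =
      ∑ E ∈ B.powerset, (-1) ^ #E * ∑ T ∈ 𝒯.filter (fun T => T ∩ E = ∅), w T := by
  have hsigns : ∀ T, ∑ E ∈ B.powerset.filter (fun E => T ∩ E = ∅), (-1 : R) ^ #E =
      if B ⊆ T then 1 else 0 := by
    intro T
    have : B.powerset.filter (fun E => T ∩ E = ∅) = (B \ T).powerset := by
      ext E
      simp [subset_sdiff, ← disjoint_iff_inter_eq_empty, disjoint_comm]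
    rw [this]
    have h := sum_powerset_neg_one_pow_card (x := B \ T)
    simp only [sdiff_eq_empty_iff_subset] at h
    simpa [apply_ite] using congrArg (Int.cast : ℤ → R) h
  simp_rw [mul_sum, sum_filter]
  rw [sum_comm]
  refine sum_congr rfl fun T _ => ?_
  simp_rw [← ite_zero_mul, ← sum_mul, ← sum_filter, hsigns, ite_zero_mul, one_mul]

namespace Matrix

section

variable {m n R : Type*} [Fintype m] [DecidableEq m] [DecidableEq n] [CommRing R]

theorem det_submatrix_transpose_mul_mul (M : Matrix m n R) (A : Matrix m m R) (T : Finset n)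
    (hT : #T = Fintype.card m) :
    ((Mᵀ * A * M).submatrix ((↑) : T → n) (↑)).det =
      (of fun i j => ∑ s ∈ T, M i s * M j s).det * A.det := by
  let e : m ≃ T := Fintype.equivOfCardEq (by rw [Fintype.card_coe, hT])
  let Q : Matrix m m R := M.submatrix id ((↑) ∘ e)
  have hgram : (of fun i j => ∑ s ∈ T, M i s * M j s) = Q * Qᵀ := by
    ext i j
    rw [of_apply, mul_apply, ← sum_coe_sort T, ← e.sum_comp]
    rfl
  have hminor : (Mᵀ * A * M).submatrix ((↑) ∘ e) ((↑) ∘ e) = Qᵀ * A * Q := by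
    simp only [Q, ← submatrix_mul_equiv _ _ _ (Equiv.refl m), Equiv.coe_refl, submatrix_id_id]
    rfl
  rw [← det_submatrix_equiv_self e, submatrix_submatrix, hminor, hgram]
  simp only [det_mul, det_transpose]
  ring

variable [Fintype n]

theorem isUnit_of_rank_eq_card {K : Type*} [Field K] {A : Matrix n n K}
    (h : A.rank = Fintype.card n) : IsUnit A := by
  rw [← mulVec_surjective_iff_isUnit, ← coe_mulVecLin, ← LinearMap.range_eq_top]
  apply Submodule.eq_top_of_finrank_eq
  rw [Module.finrank_fintype_fun_eq_card]
  exact h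

theorem det_add_one_eq_sum_det_submatrix (A : Matrix n n R) :
    (A + 1).det = ∑ s : Finset n, (A.submatrix ((↑) : s → n) (↑)).det := by
  simp_rw [← det_piecewise_one_eq_submatrix_det]
  exact detRowAlternating.map_add_univ A.row (row 1)

theorem det_submatrix_diagonal_mul (d : n → R) (A : Matrix n n R) (T : Finset n) :
    ((diagonal d * A).submatrix ((↑) : T → n) (↑)).det =
      (∏ i ∈ T, d i) * (A.submatrix ((↑) : T → n) (↑)).det := by
  have : (diagonal d * A).submatrix ((↑) : T → n) (↑) =
      diagonal (fun i : T => d i) * A.submatrix (↑) (↑) := by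
    ext i j
    simp [diagonal_mul]
  rw [this, det_mul, det_diagonal, prod_coe_sort T d]

theorem det_submatrix_diagonal_indicator_mul (B T : Finset n) (A : Matrix n n R) :
    ((diagonal (fun i => if i ∈ B then (1 : R) else 0) * A).submatrix ((↑) : T → n) (↑)).det
      =
        if T ⊆ B then (A.submatrix ((↑) : T → n) ((↑) : T → n)).det else 0 := by
  simp [det_submatrix_diagonal_mul, prod_boole, subset_iff]

theorem det_submatrix_eq_sum_powerset (A : Matrix n n R) (B : Finset n) :
    (A.submatrix ((↑) : B → n) (↑)).det =
      ∑ E ∈ B.powerset, (-1) ^ #E * ((1 - A).submatrix ((↑) : E → n) (↑)).det := by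
  have hrows : of (B.piecewise A.row (row 1)) =
      diagonal (fun i => if i ∈ B then (1 : R) else 0) * (A - 1) + 1 := by
    ext i j
    by_cases hi : i ∈ B <;> simp [hi, diagonal_mul, Finset.piecewise, Matrix.row]
  rw [← det_piecewise_one_eq_submatrix_det, hrows, det_add_one_eq_sum_det_submatrix]
  simp_rw [det_submatrix_diagonal_indicator_mul]
  rw [← sum_filter, filter_subset_univ]
  refine sum_congr rfl fun E _ => ?_
  rw [← neg_sub, ← Fintype.card_coe, ← det_neg]
  rfl

theorem coeff_det_one_add_X_smul_card (A : Matrix n n R) :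
    (1 + (X : R[X]) • A.map C).det.coeff (Fintype.card n) = A.det := by
  rw [coeff_det_one_add_X_smul_eq_sum_minors, ← card_univ, powersetCard_self, sum_singleton]
  exact det_submatrix_equiv_self (Equiv.subtypeUnivEquiv mem_univ) A

theorem det_one_add_X_smul_mul_comm (A : Matrix n m R) (B : Matrix m n R) :
    (1 + (X : R[X]) • (A * B).map C).det = (1 + (X : R[X]) • (B * A).map C).det := by
  rw [Matrix.map_mul, Matrix.map_mul, ← smul_mul, det_one_add_mul_comm, Matrix.mul_smul]

theorem sum_det_submatrix_filter_inter_eq_empty (U : Matrix n m R) (V : Matrix m n R)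
    (hVU : V * U = 1) (B : Finset n) :
    ∑ T ∈ (univ.powersetCard (Fintype.card m)).filter (fun T => T ∩ B = ∅),
        ((U * V).submatrix ((↑) : T → n) ((↑) : T → n)).det =
      ((1 - U * V).submatrix ((↑) : B → n) ((↑) : B → n)).det := by
  set D : Matrix n n R := diagonal fun i => if i ∈ Bᶜ then 1 else 0
  set E : Matrix n n R := diagonal fun i => if i ∈ B then 1 else 0
  have hDE : D = 1 - E := by
    ext i j
    by_cases hi : i ∈ B <;> simp [D, E, hi, diagonal, one_apply]
  have hmasked : ∑ T ∈ (univ.powersetCard (Fintype.card m)).filter (fun T => T ∩ B = ∅),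
        ((U * V).submatrix ((↑) : T → n) ((↑) : T → n)).det =
      (1 + (X : R[X]) • (D * (U * V)).map C).det.coeff (Fintype.card m) := by
    rw [coeff_det_one_add_X_smul_eq_sum_minors]
    simp_rw [D, det_submatrix_diagonal_indicator_mul, ← sum_filter,
      subset_compl_iff_disjoint_right, disjoint_iff_inter_eq_empty]
  have hrows : 1 - E * (U * V) = of (B.piecewise (1 - U * V).row (row 1)) := by
    ext i j
    by_cases hi : i ∈ B <;> simp [E, hi, diagonal_mul, Finset.piecewise, Matrix.row]
  rw [hmasked, ← Matrix.mul_assoc, det_one_add_X_smul_mul_comm, hDE, Matrix.sub_mul,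
    Matrix.one_mul, Matrix.mul_sub, hVU, coeff_det_one_add_X_smul_card, det_one_sub_mul_comm,
    Matrix.mul_assoc, hrows, det_piecewise_one_eq_submatrix_det]

end

end Matrix

/-- Lyons' determinantal measure lemma.  Let `M` be an `R × S` real matrix of full rank `|R|`,
and define the determinantal measure on `|R|`-element subsets `T` of `S` by
`μ T = det(M_{•,T})² / det(M Mᵀ)` (here `det(M_{•,T})² = det(M_{•,T} (M_{•,T})ᵀ)`, the latter
being the square matrix `∑_{s ∈ T} M i s * M j s`).  Then `μ` is a probability measure, and
with `P = Mᵀ (M Mᵀ)⁻¹ M` (the projection onto the row space of `M`), for every `B ⊆ S`: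
`μ {T : B ⊆ T} = det P_{B,B}` and `μ {T : T ∩ B = ∅} = det (Id − P)_{B,B}`. -/
theorem stmt14 {R S : Type} [Fintype R] [Fintype S] [DecidableEq R] [DecidableEq S]
    (M : Matrix R S ℝ) (hrank : M.rank = Fintype.card R) :
    let μ : Finset S → ℝ := fun T =>
      (Matrix.of fun i j => ∑ s ∈ T, M i s * M j s : Matrix R R ℝ).det / (M * Mᵀ).det
    let P : Matrix S S ℝ := Mᵀ * (M * Mᵀ)⁻¹ * M
    (∑ T ∈ Finset.univ.powersetCard (Fintype.card R), μ T) = 1 ∧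
    (∀ B : Finset S,
      (∑ T ∈ (Finset.univ.powersetCard (Fintype.card R)).filter (fun T => B ⊆ T), μ T) =
        (P.submatrix (fun b : ↥B => (b : S)) (fun b : ↥B => (b : S))).det) ∧
    (∀ B : Finset S,
      (∑ T ∈ (Finset.univ.powersetCard (Fintype.card R)).filter (fun T => T ∩ B = ∅), μ T) =
        ((1 - P).submatrix (fun b : ↥B => (b : S)) (fun b : ↥B => (b : S))).det) := by
  intro μ P
  have hdet : IsUnit (M * Mᵀ).det :=
    (isUnit_iff_isUnit_det _).mp <|
      isUnit_of_rank_eq_card (by rw [rank_self_mul_transpose, hrank])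
  have hμ : ∀ T ∈ univ.powersetCard (Fintype.card R),
      μ T = (P.submatrix ((↑) : T → S) (↑)).det := by
    intro T hT
    rw [det_submatrix_transpose_mul_mul _ _ _ (mem_powersetCard.mp hT).2, det_nonsing_inv,
      Ring.inverse_eq_inv']
    exact div_eq_mul_inv _ _
  have avoid : ∀ B : Finset S,
      ∑ T ∈ (univ.powersetCard (Fintype.card R)).filter (fun T => T ∩ B = ∅), μ T =
        ((1 - P).submatrix ((↑) : B → S) (↑)).det := by
    intro B
    rw [sum_congr rfl fun T hT => hμ T (mem_filter.mp hT).1]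
    exact sum_det_submatrix_filter_inter_eq_empty (Mᵀ * (M * Mᵀ)⁻¹) M
      (by rw [← Matrix.mul_assoc, mul_nonsing_inv _ hdet]) B
  have contain : ∀ B : Finset S,
      ∑ T ∈ (univ.powersetCard (Fintype.card R)).filter (B ⊆ ·), μ T =
        (P.submatrix ((↑) : B → S) (↑)).det := by
    intro B
    rw [sum_filter_subset_eq_sum_powerset, det_submatrix_eq_sum_powerset P B]
    exact sum_congr rfl fun E _ => by rw [avoid]
  refine ⟨?_, contain, avoid⟩
  simpa using avoid ∅
end

section
/- Chernoff-type bound: under the same MGF domination hypothesis on the random variables A_{ij} with mean p, for any subset H of pairs and any ε ≥ 3 with M ≥ log((1−p)ε / (1−pε)) (and pε < 1), we have Pr[∑_{(i,j)∈H} A_{ij} ≥ ε p |H|] ≤ E · exp(−(ε log ε / 3) · p |H|). -/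
open MeasureTheory Finset

/-- Chernoff-type bound for sums of `[0,1]`-valued random variables `A_e` (indexed by pairs
`i < j` in `[n]`) with mean `p`, whose joint moment generating function is dominated (up to
the constant `E`) by that of independent `Bernoulli(p)` variables for parameters in `[0,M]`:
for `ε ≥ 3` with `pε < 1` and `M ≥ log((1−p)ε/(1−pε))`,
`Pr[∑_{e∈H} A_e ≥ ε p |H|] ≤ E exp(−(ε log ε / 3) p |H|)`. -/
theorem stmt16 {Ω : Type} [MeasurableSpace Ω] (μ : Measure Ω) [IsProbabilityMeasure μ]
    (n : ℕ) (p : ℝ) (hp : p ∈ Set.Ioo (0 : ℝ) 1)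
    (A : {q : Fin n × Fin n // q.1 < q.2} → Ω → ℝ)
    (hmeas : ∀ e, Measurable (A e))
    (hbd : ∀ e ω, A e ω ∈ Set.Icc (0 : ℝ) 1)
    (hmean : ∀ e, ∫ ω, A e ω ∂μ = p)
    (E M : ℝ) (hE : 1 ≤ E) (hM : 0 < M)
    (hmgf : ∀ t : {q : Fin n × Fin n // q.1 < q.2} → ℝ, (∀ e, t e ∈ Set.Icc (0 : ℝ) M) →
      ∫ ω, Real.exp (∑ e, t e * A e ω) ∂μ ≤ E * ∏ e, (1 - p + p * Real.exp (t e)))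
    (H : Finset {q : Fin n × Fin n // q.1 < q.2}) (ε : ℝ) (hε : 3 ≤ ε)
    (hpε : p * ε < 1) (hMε : Real.log ((1 - p) * ε / (1 - p * ε)) ≤ M) :
    (μ {ω | ε * p * H.card ≤ ∑ e ∈ H, A e ω}).toReal ≤
      E * Real.exp (-(ε * Real.log ε / 3) * p * H.card) := by
  obtain ⟨hp0, hp1⟩ := hp
  have hε0 : (0:ℝ) < ε := by linarith
  have h1pε : (0:ℝ) < 1 - p * ε := by linarith
  have h1p : (0:ℝ) < 1 - p := by linarith
  set q : ℝ := (1 - p) / (1 - p * ε) with hqdef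
  have hq0 : 0 < q := by positivity
  set L : ℝ := Real.log q with hLdef
  have hexpL : Real.exp L = q := Real.exp_log hq0
  have hreq : (1 - p) * ε / (1 - p * ε) = q * ε := by
    rw [hqdef]; ring
  set t₀ : ℝ := Real.log ((1 - p) * ε / (1 - p * ε)) with ht₀def
  have ht₀split : t₀ = L + Real.log ε := by
    rw [ht₀def, hreq, Real.log_mul (ne_of_gt hq0) (ne_of_gt hε0)]
  have hexpt₀ : Real.exp t₀ = q * ε := by
    rw [ht₀def, hreq]; exact Real.exp_log (by positivity)
  have hlogε : (1:ℝ) ≤ Real.log ε := by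
    rw [Real.le_log_iff_exp_le hε0]
    calc Real.exp 1 ≤ 2.7182818286 := le_of_lt Real.exp_one_lt_d9
      _ ≤ ε := by linarith
  have ht0 : 0 ≤ t₀ := by
    rw [ht₀split]
    have : 0 ≤ L := Real.log_nonneg (by
      rw [hqdef, le_div_iff₀ h1pε]; nlinarith)
    linarith
  -- parameters for the MGF hypothesis
  set t : {q : Fin n × Fin n // q.1 < q.2} → ℝ := fun e => if e ∈ H then t₀ else 0 with htdef
  have hmem : ∀ e, t e ∈ Set.Icc (0:ℝ) M := by
    intro e
    rw [htdef]
    by_cases h : e ∈ H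
    · simp only [h, if_true]; exact ⟨ht0, hMε⟩
    · simp only [h, if_false]; exact ⟨le_refl _, le_of_lt hM⟩
  set S : Ω → ℝ := fun ω => ∑ e ∈ H, A e ω with hSdef
  have hkey : ∀ ω, t₀ * S ω = ∑ e, t e * A e ω := by
    intro ω
    simp only [htdef, ite_mul, zero_mul, Finset.sum_ite_mem, Finset.univ_inter, hSdef,
      Finset.mul_sum]
  have hSmeas : Measurable S := Finset.measurable_sum H (fun e _ => hmeas e)
  have hint : Integrable (fun ω => Real.exp (t₀ * S ω)) μ := by
    apply Integrable.mono' (integrable_const (Real.exp (t₀ * H.card)))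
    · exact ((hSmeas.const_mul t₀).exp).aestronglyMeasurable
    · filter_upwards with ω
      rw [Real.norm_eq_abs, abs_of_pos (Real.exp_pos _)]
      apply Real.exp_le_exp.mpr
      apply mul_le_mul_of_nonneg_left _ ht0
      calc S ω ≤ ∑ _e ∈ H, (1:ℝ) := Finset.sum_le_sum (fun e _ => (hbd e ω).2)
        _ = H.card := by simp
  have h1 := ProbabilityTheory.measure_ge_le_exp_mul_mgf (X := S) (μ := μ)
    (ε * p * H.card) ht0 hint
  have h2 : ProbabilityTheory.mgf S μ t₀ ≤ E * q ^ H.card := by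
    rw [ProbabilityTheory.mgf]
    calc ∫ ω, Real.exp (t₀ * S ω) ∂μ = ∫ ω, Real.exp (∑ e, t e * A e ω) ∂μ :=
          integral_congr_ae (Filter.Eventually.of_forall fun ω => congrArg Real.exp (hkey ω))
      _ ≤ E * ∏ e, (1 - p + p * Real.exp (t e)) := hmgf t hmem
      _ = E * q ^ H.card := by
          congr 1
          have : ∀ e : {q : Fin n × Fin n // q.1 < q.2},
              (1 - p + p * Real.exp (t e)) = if e ∈ H then q else 1 := by
            intro e
            rw [htdef]
            by_cases h : e ∈ H
            · simp only [h, if_true, hexpt₀]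
              rw [hqdef]
              field_simp
              ring
            · simp only [h, if_false, Real.exp_zero]; ring
          simp only [this, Finset.prod_ite_mem, Finset.univ_inter, Finset.prod_const]
  have hm : (0:ℝ) ≤ (H.card : ℝ) := Nat.cast_nonneg _
  -- key scalar inequality
  have hL1 : L * (1 - p * ε) ≤ p * (ε - 1) := by
    have := Real.log_le_sub_one_of_pos hq0
    rw [← hLdef] at this
    have h2 : q - 1 = p * (ε - 1) / (1 - p * ε) := by
      rw [hqdef]; field_simp; ring
    rw [h2] at this
    exact (le_div_iff₀ h1pε).mp this
  have hlog2 : 2 - 3 / ε ≤ Real.log ε := by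
    have h3 : Real.log (3 / ε) ≤ 3 / ε - 1 := Real.log_le_sub_one_of_pos (by positivity)
    rw [Real.log_div (by norm_num) (ne_of_gt hε0)] at h3
    have hlog3 : (1:ℝ) ≤ Real.log 3 := by
      rw [Real.le_log_iff_exp_le (by norm_num)]
      calc Real.exp 1 ≤ 2.7182818286 := le_of_lt Real.exp_one_lt_d9
        _ ≤ 3 := by norm_num
    linarith
  have hε1 : ε - 1 ≤ 2 / 3 * ε * Real.log ε := by
    have h4 : 2 / 3 * ε * (2 - 3 / ε) ≤ 2 / 3 * ε * Real.log ε :=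
      mul_le_mul_of_nonneg_left hlog2 (by positivity)
    have h5 : 2 / 3 * ε * (2 - 3 / ε) = 4 / 3 * ε - 2 := by field_simp; ring
    rw [h5] at h4
    linarith
  have hunit : -t₀ * (ε * p) + L ≤ -(ε * Real.log ε / 3) * p := by
    rw [ht₀split]
    have : L * (1 - p * ε) ≤ 2 / 3 * (p * ε) * Real.log ε := by
      calc L * (1 - p * ε) ≤ p * (ε - 1) := hL1
        _ ≤ p * (2 / 3 * ε * Real.log ε) :=
            mul_le_mul_of_nonneg_left hε1 (le_of_lt hp0)
        _ = 2 / 3 * (p * ε) * Real.log ε := by ring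
    nlinarith
  have hexpineq : -t₀ * (ε * p * H.card) + H.card * L ≤
      -(ε * Real.log ε / 3) * p * H.card := by
    have := mul_le_mul_of_nonneg_left hunit hm
    nlinarith [this]
  calc (μ {ω | ε * p * H.card ≤ S ω}).toReal
      ≤ Real.exp (-t₀ * (ε * p * H.card)) * ProbabilityTheory.mgf S μ t₀ := h1
    _ ≤ Real.exp (-t₀ * (ε * p * H.card)) * (E * q ^ H.card) :=
        mul_le_mul_of_nonneg_left h2 (le_of_lt (Real.exp_pos _))
    _ = E * Real.exp (-t₀ * (ε * p * H.card) + H.card * L) := by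
        rw [Real.exp_add, ← hexpL, ← Real.exp_nat_mul]
        ring
    _ ≤ E * Real.exp (-(ε * Real.log ε / 3) * p * H.card) :=
        mul_le_mul_of_nonneg_left (Real.exp_le_exp.mpr hexpineq) (by linarith)
end

section
/- Coupon-collector lower tail: let v_1, ..., v_m be independent uniform samples from [n−1] and R_m = {v_1, ..., v_m} the set of distinct values. Then for any s > 0, E[exp(−s|R_m|)] ≤ e^{−ms} ∏_{i=1}^{m−1}(1 + i(e^s − 1)/(n−1)), and consequently for every 1 ≤ j ≤ m, Pr[|R_m| ≤ m − j] ≤ (e m² / (2 j n))^j. -/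
/-!
Given the first `k` draws, the next one repeats one of the at most `k` values already seen with
probability `|R_k| / (n - 1) ≤ k / (n - 1)`, and otherwise contributes a factor `e^{-s}`; so
summing `e^{-s |R|}` over the last draw multiplies it by at most `k + (n - 1 - k) e^{-s}`, which
gives the moment generating function bound factor by factor. For the tail, `∏ (1 + x_i) ≤
exp (∑ x_i)` turns that bound into `exp (-j s + m (m - 1) (e^s - 1) / (2 (n - 1)))`, and the
Chernoff parameter `s = log (2 j n / m²)` yields the stated estimate (for `j ≤ m² / (2 n)` it
exceeds `1`).
-/

open MeasureTheory ProbabilityTheory Finset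
open scoped ENNReal

namespace Finset

lemma image_univ_fin_cons {α : Type*} [DecidableEq α] {m : ℕ} (a : α) (f : Fin m → α) :
    univ.image (Fin.cons a f : Fin (m + 1) → α) = insert a (univ.image f) := by
  ext x
  simp [Fin.exists_fin_succ, eq_comm]

variable {α : Type*} [Fintype α] [DecidableEq α]

lemma sum_pow_card_insert (x : ℝ) (t : Finset α) :
    ∑ a, x ^ #(insert a t) = x ^ #t * (#t + (Fintype.card α - #t) * x) := by
  have hin : ∑ a ∈ t, x ^ #(insert a t) = ∑ a ∈ t, x ^ #t :=
    sum_congr rfl fun a ha => by rw [insert_eq_of_mem ha]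
  have hout : ∑ a ∈ tᶜ, x ^ #(insert a t) = ∑ a ∈ tᶜ, x ^ (#t + 1) :=
    sum_congr rfl fun a ha => by rw [card_insert_of_notMem (mem_compl.1 ha)]
  rw [← sum_add_sum_compl t, hin, hout, sum_const, sum_const, card_compl, nsmul_eq_mul,
    nsmul_eq_mul, Nat.cast_sub t.card_le_univ]
  ring

lemma sum_pow_card_image_le {x : ℝ} (hx₀ : 0 ≤ x) (hx₁ : x ≤ 1) (m : ℕ) :
    ∑ f : Fin m → α, x ^ #(univ.image f) ≤
      ∏ i ∈ range m, (i + (Fintype.card α - i) * x) := by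
  induction m with
  | zero => simp
  | succ m ih =>
    have hcons : ∑ f : Fin (m + 1) → α, x ^ #(univ.image f) =
        ∑ f : Fin m → α, ∑ a, x ^ #(insert a (univ.image f)) := by
      rw [← Fintype.sum_equiv (Fin.consEquiv fun _ => α)
        (fun p => x ^ #(insert p.1 (univ.image p.2))) _ fun p => by
          simp [Fin.consEquiv, image_univ_fin_cons], Fintype.sum_prod_type, sum_comm]
    have hstep (f : Fin m → α) : #(univ.image f) + (Fintype.card α - #(univ.image f)) * x ≤
        m + (Fintype.card α - m) * x := by
      have : (#(univ.image f) : ℝ) ≤ m := by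
        exact_mod_cast card_image_le.trans (card_univ.trans (Fintype.card_fin m)).le
      nlinarith
    calc ∑ f : Fin (m + 1) → α, x ^ #(univ.image f)
        = ∑ f : Fin m → α, x ^ #(univ.image f) *
            (#(univ.image f) + (Fintype.card α - #(univ.image f)) * x) := by
          simp only [hcons, sum_pow_card_insert]
      _ ≤ (∑ f : Fin m → α, x ^ #(univ.image f)) * (m + (Fintype.card α - m) * x) := by
          rw [sum_mul]
          exact sum_le_sum fun f _ => mul_le_mul_of_nonneg_left (hstep f) (by positivity)
      _ ≤ ∏ i ∈ range (m + 1), (i + (Fintype.card α - i) * x) := by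
          rw [prod_range_succ]
          gcongr
          nlinarith [(Nat.cast_nonneg (Fintype.card α) : (0 : ℝ) ≤ _)]

end Finset

section
variable {Ω α : Type*} [MeasurableSpace Ω] {μ : Measure Ω} [Fintype α] [MeasurableSpace α]
  [MeasurableSingletonClass α] {m : ℕ} {v : Fin m → Ω → α}

lemma measure_forall_eq_of_iIndepFun (hindep : iIndepFun v μ)
    (hunif : ∀ i a, μ {ω | v i ω = a} = (Fintype.card α : ℝ≥0∞)⁻¹) (f : Fin m → α) :
    μ {ω | ∀ i, v i ω = f i} = (Fintype.card α : ℝ≥0∞)⁻¹ ^ m := by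
  have hinter : {ω | ∀ i, v i ω = f i} = ⋂ i, v i ⁻¹' {f i} := by
    ext ω
    simp
  rw [hinter, hindep.meas_iInter fun i => ⟨{f i}, measurableSet_singleton _, rfl⟩]
  simp [Set.preimage, hunif]

lemma integral_comp_eq_sum_div [IsFiniteMeasure μ] (hmeas : ∀ i, Measurable (v i))
    (hindep : iIndepFun v μ)
    (hunif : ∀ i a, μ {ω | v i ω = a} = (Fintype.card α : ℝ≥0∞)⁻¹) (g : (Fin m → α) → ℝ) :
    ∫ ω, g (fun i => v i ω) ∂μ = (∑ f, g f) / Fintype.card α ^ m := by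
  have hV : Measurable fun ω i => v i ω := measurable_pi_lambda _ hmeas
  rw [← integral_map hV.aemeasurable (measurable_of_finite g).aestronglyMeasurable,
    integral_fintype Integrable.of_finite, sum_div]
  refine sum_congr rfl fun f _ => ?_
  rw [Measure.real, Measure.map_apply hV (measurableSet_singleton f)]
  have : (fun ω i => v i ω) ⁻¹' {f} = {ω | ∀ i, v i ω = f i} := by
    ext ω
    simp [funext_iff]
  rw [this, measure_forall_eq_of_iIndepFun hindep hunif, smul_eq_mul]
  simp [div_eq_inv_mul]

lemma integrable_comp_of_measurable [IsFiniteMeasure μ] (hmeas : ∀ i, Measurable (v i))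
    (g : (Fin m → α) → ℝ) : Integrable (fun ω => g (fun i => v i ω)) μ :=
  Integrable.of_finite.comp_measurable (measurable_pi_lambda _ hmeas)

lemma mgf_neg_card_image_le [IsFiniteMeasure μ] [DecidableEq α] [Nonempty α]
    (hmeas : ∀ i, Measurable (v i)) (hindep : iIndepFun v μ)
    (hunif : ∀ i a, μ {ω | v i ω = a} = (Fintype.card α : ℝ≥0∞)⁻¹) {s : ℝ} (hs : 0 ≤ s) :
    mgf (fun ω => (#(univ.image fun i => v i ω) : ℝ)) μ (-s) ≤
      Real.exp (-m * s) * ∏ i ∈ range m, (1 + i * (Real.exp s - 1) / Fintype.card α) := by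
  have hN : (0 : ℝ) < Fintype.card α := by exact_mod_cast Fintype.card_pos
  have hexp : ∀ k : ℕ, Real.exp (-s * k) = Real.exp (-s) ^ k := fun k => by
    rw [mul_comm, Real.exp_nat_mul]
  have hfactor (i : ℕ) : (i + (Fintype.card α - i) * Real.exp (-s)) / Fintype.card α =
      Real.exp (-s) * (1 + i * (Real.exp s - 1) / Fintype.card α) := by
    rw [Real.exp_neg]
    field_simp
    ring
  calc mgf (fun ω => (#(univ.image fun i => v i ω) : ℝ)) μ (-s)
      = (∑ f : Fin m → α, Real.exp (-s) ^ #(univ.image f)) / Fintype.card α ^ m := by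
        simp only [mgf, hexp]
        exact integral_comp_eq_sum_div hmeas hindep hunif fun f => Real.exp (-s) ^ #(univ.image f)
    _ ≤ (∏ i ∈ range m, (i + (Fintype.card α - i) * Real.exp (-s))) / Fintype.card α ^ m := by
        gcongr
        exact sum_pow_card_image_le (Real.exp_nonneg _)
          (Real.exp_le_one_iff.2 (neg_nonpos.2 hs)) m
    _ = Real.exp (-m * s) * ∏ i ∈ range m, (1 + i * (Real.exp s - 1) / Fintype.card α) := by
        rw [neg_mul, ← mul_neg, Real.exp_nat_mul, pow_eq_prod_const, pow_eq_prod_const,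
          ← prod_div_distrib, ← prod_mul_distrib]
        exact prod_congr rfl fun i _ => hfactor i

lemma prod_range_one_add_mul_le_exp {t : ℝ} (ht : 0 ≤ t) (m : ℕ) :
    ∏ i ∈ range m, (1 + i * t) ≤ Real.exp (m * (m - 1) / 2 * t) := by
  have hgauss : ∑ i ∈ range m, (i : ℝ) = m * (m - 1) / 2 := by
    induction m with
    | zero => simp
    | succ m ih => rw [sum_range_succ, ih]; push_cast; ring
  calc ∏ i ∈ range m, (1 + i * t) ≤ Real.exp (∑ i ∈ range m, i * t) :=
        Real.prod_one_add_le_exp_sum _ fun i => mul_nonneg (Nat.cast_nonneg i) ht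
    _ = Real.exp (m * (m - 1) / 2 * t) := by rw [← sum_mul, hgauss]

lemma measureReal_card_image_le_le [IsFiniteMeasure μ] [DecidableEq α] [Nonempty α]
    (hmeas : ∀ i, Measurable (v i)) (hindep : iIndepFun v μ)
    (hunif : ∀ i a, μ {ω | v i ω = a} = (Fintype.card α : ℝ≥0∞)⁻¹) (j : ℝ) {s : ℝ}
    (hs : 0 ≤ s) :
    μ.real {ω | (#(univ.image fun i => v i ω) : ℝ) ≤ m - j} ≤
      Real.exp (-j * s + m * (m - 1) / (2 * Fintype.card α) * (Real.exp s - 1)) := by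
  have ht : 0 ≤ (Real.exp s - 1) / Fintype.card α :=
    div_nonneg (by linarith [Real.one_le_exp hs]) (Nat.cast_nonneg _)
  calc μ.real {ω | (#(univ.image fun i => v i ω) : ℝ) ≤ m - j}
      ≤ Real.exp (-(-s) * (m - j)) * mgf (fun ω => (#(univ.image fun i => v i ω) : ℝ)) μ (-s) :=
        measure_le_le_exp_mul_mgf _ (neg_nonpos.2 hs)
          (integrable_comp_of_measurable hmeas fun f => Real.exp (-s * #(univ.image f)))
    _ ≤ Real.exp (s * (m - j)) * (Real.exp (-m * s) *
          ∏ i ∈ range m, (1 + i * ((Real.exp s - 1) / Fintype.card α))) := by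
        simp only [neg_neg, ← mul_div_assoc]
        gcongr
        exact mgf_neg_card_image_le hmeas hindep hunif hs
    _ ≤ Real.exp (s * (m - j)) * (Real.exp (-m * s) *
          Real.exp (m * (m - 1) / 2 * ((Real.exp s - 1) / Fintype.card α))) := by
        gcongr
        exact prod_range_one_add_mul_le_exp ht m
    _ = Real.exp (-j * s + m * (m - 1) / (2 * Fintype.card α) * (Real.exp s - 1)) := by
        rw [← Real.exp_add, ← Real.exp_add]
        congr 1
        ring

end

lemma le_pow_of_forall_le_exp_poisson {P a c : ℝ} {j : ℕ} (hj : 0 < j) (ha : 0 < a)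
    (hca : c * (j - a) ≤ j * a) (hP : P ≤ 1)
    (h : ∀ s, 0 < s → P ≤ Real.exp (-j * s + c * (Real.exp s - 1))) :
    P ≤ (Real.exp 1 * a / j) ^ j := by
  have hj' : (0 : ℝ) < j := Nat.cast_pos.2 hj
  rcases le_or_gt (j : ℝ) a with hja | hja
  · have : 1 ≤ Real.exp 1 * a / j := by
      rw [le_div_iff₀ hj']
      nlinarith [Real.add_one_le_exp (1 : ℝ)]
    exact hP.trans (one_le_pow₀ this)
  · have hja' : 1 < j / a := (one_lt_div ha).2 hja
    have hexp : Real.exp (Real.log (j / a)) = j / a := Real.exp_log (by positivity)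
    refine (h _ (Real.log_pos hja')).trans ?_
    have hc : c * (j / a - 1) ≤ j := by
      rw [div_sub_one ha.ne', mul_div_assoc', div_le_iff₀ ha]
      exact hca
    calc Real.exp (-j * Real.log (j / a) + c * (Real.exp (Real.log (j / a)) - 1))
        ≤ Real.exp (j * (1 - Real.log (j / a))) := by
          rw [hexp]
          gcongr
          linarith
      _ = (Real.exp 1 * a / j) ^ j := by
          rw [Real.exp_nat_mul, Real.exp_sub, hexp]
          field_simp

lemma collision_mean_mul_sub_le {m n j : ℝ} (hn : 2 ≤ n) (hj : 1 ≤ j) (hjm : j ≤ m) :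
    m * (m - 1) / (2 * (n - 1)) * (j - m ^ 2 / (2 * n)) ≤ j * (m ^ 2 / (2 * n)) := by
  have hcubic : 2 * j * (m - n) ≤ m ^ 2 * (m - 1) := by
    rcases le_total m n with h | h
    · nlinarith
    · nlinarith [mul_nonneg (sub_nonneg.2 hjm) (sub_nonneg.2 h),
        mul_nonneg (mul_nonneg (sub_nonneg.2 (hn.trans h)) (by linarith : 0 ≤ m))
          (by linarith : 0 ≤ m - 1)]
  have hgap : j * (m ^ 2 / (2 * n)) - m * (m - 1) / (2 * (n - 1)) * (j - m ^ 2 / (2 * n)) =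
      m * (m ^ 2 * (m - 1) - 2 * j * (m - n)) / (4 * n * (n - 1)) := by
    have : n - 1 ≠ 0 := by linarith
    have : n ≠ 0 := by linarith
    field_simp
    ring
  have : 0 ≤ m * (m ^ 2 * (m - 1) - 2 * j * (m - n)) / (4 * n * (n - 1)) :=
    div_nonneg (mul_nonneg (by linarith) (by linarith)) (by nlinarith)
  linarith

/-- Coupon-collector lower tail.  Let `v_1, …, v_m` be independent uniform samples from a set
of `n − 1` elements and let `R_m = {v_1, …, v_m}` be the set of distinct values.  Then for
every `s > 0`, `E[exp(−s |R_m|)] ≤ e^{−ms} ∏_{i=1}^{m−1} (1 + i (e^s − 1)/(n−1))`, and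
consequently `Pr[|R_m| ≤ m − j] ≤ (e m² / (2 j n))^j` for every `1 ≤ j ≤ m`. -/
theorem stmt18 {Ω : Type} [MeasurableSpace Ω] (μ : Measure Ω) [IsProbabilityMeasure μ]
    (n m : ℕ) (hn : 2 ≤ n)
    (v : Fin m → Ω → Fin (n - 1))
    (hmeas : ∀ i, Measurable (v i))
    (hunif : ∀ (i : Fin m) (a : Fin (n - 1)),
      μ {ω | v i ω = a} = (1 : ENNReal) / (n - 1 : ℕ))
    (hindep : iIndepFun v μ) :
    (∀ s : ℝ, 0 < s →
      ∫ ω, Real.exp (-s * ((Finset.univ.image (fun i => v i ω)).card : ℝ)) ∂μ ≤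
        Real.exp (-(m : ℝ) * s) *
          ∏ i ∈ Finset.range m, (1 + (i : ℝ) * (Real.exp s - 1) / ((n : ℝ) - 1))) ∧
    (∀ j : ℕ, 1 ≤ j → j ≤ m →
      (μ {ω | ((Finset.univ.image (fun i => v i ω)).card : ℝ) ≤ (m : ℝ) - j}).toReal ≤
        (Real.exp 1 * (m : ℝ) ^ 2 / (2 * (j : ℝ) * n)) ^ j) := by
  have : Nonempty (Fin (n - 1)) := ⟨⟨0, by omega⟩⟩
  have hcard : (Fintype.card (Fin (n - 1)) : ℝ) = n - 1 := by
    rw [Fintype.card_fin, Nat.cast_sub (by omega), Nat.cast_one]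
  have hunif' (i : Fin m) (a : Fin (n - 1)) :
      μ {ω | v i ω = a} = (Fintype.card (Fin (n - 1)) : ENNReal)⁻¹ := by
    rw [hunif, one_div, Fintype.card_fin]
  have hn' : (2 : ℝ) ≤ n := by exact_mod_cast hn
  refine ⟨fun s hs => ?_, fun j hj hjm => ?_⟩
  · have := mgf_neg_card_image_le hmeas hindep hunif' hs.le
    rwa [hcard] at this
  · have hm : 0 < m := by omega
    rw [show Real.exp 1 * (m : ℝ) ^ 2 / (2 * j * n) = Real.exp 1 * (m ^ 2 / (2 * n)) / j by ring]
    refine le_pow_of_forall_le_exp_poisson (c := m * (m - 1) / (2 * (n - 1))) hj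
      (by positivity) ?_ measureReal_le_one fun s hs => ?_
    · exact collision_mean_mul_sub_le hn' (Nat.one_le_cast.2 hj) (Nat.cast_le.2 hjm)
    · have := measureReal_card_image_le_le hmeas hindep hunif' j hs.le
      rwa [hcard] at this
end
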